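/- arXiv:2212.06285 — 13 statements merged into one kernel-verified Lean document; each statement's English description precedes it below -/
import Mathlib

section
/- Let N ≥ 1 be a natural number and let a : {0,1,…,N} → ℂ satisfy Σ_{w=0}^N |a_w|² = 1. In the Hilbert space ℂ^{N+1} with orthonormal basis (e_0,…,e_N), set ψ = Σ_{w=0}^N a_w e_w, let J be the diagonal matrix with J e_w = (N/2 − w) e_w, and set m_1 = Σ_w |a_w|² w, m_2 = Σ_w |a_w|² w², v = m_2 − m_1². Assume v > 0 and define b = (Σ_w a_w w e_w − m_1 ψ)/√v. Then: (i) ⟨ψ, b⟩ = 0 and ‖b‖ = 1 (so {ψ, b} is an orthonormal set); and (ii) the matrix L = 2i(ψψ* J − J ψψ*) satisfies L = √v · (ψ + i b)(ψ + i b)* − √v · (ψ − i b)(ψ − i b)*, where for a vector x, x x* denotes the rank-one outer-product matrix (x x*)_{jk} = x_j · conj(x_k). -/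
open Finset

theorem stmt_0 (N : ℕ) (hN : 1 ≤ N) (a : Fin (N+1) → ℂ)
    (hnorm : ∑ w, ‖a w‖ ^ 2 = 1)
    (ψ : Fin (N+1) → ℂ) (hψ : ψ = a)
    (J : Matrix (Fin (N+1)) (Fin (N+1)) ℂ)
    (hJ : J = Matrix.diagonal (fun w : Fin (N+1) => ((N : ℂ)/2 - (w.val : ℂ))))
    (m1 m2 v : ℝ)
    (hm1 : m1 = ∑ w, ‖a w‖ ^ 2 * (w.val : ℝ))
    (hm2 : m2 = ∑ w, ‖a w‖ ^ 2 * (w.val : ℝ)^2)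
    (hv : v = m2 - m1^2) (hvpos : 0 < v)
    (b : Fin (N+1) → ℂ)
    (hb : b = fun w => (a w * (w.val : ℂ) - (m1 : ℂ) * a w) / (Real.sqrt v : ℂ))
    (L : Matrix (Fin (N+1)) (Fin (N+1)) ℂ)
    (hL : L = (2 * Complex.I) •
      (Matrix.vecMulVec ψ (star ψ) * J - J * Matrix.vecMulVec ψ (star ψ))) :
    (∑ w, (starRingEnd ℂ) (ψ w) * b w = 0) ∧
    (∑ w, ‖b w‖ ^ 2 = 1) ∧
    L = ((Real.sqrt v : ℝ) : ℂ) • Matrix.vecMulVec (ψ + Complex.I • b) (star (ψ + Complex.I • b))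
      - ((Real.sqrt v : ℝ) : ℂ) • Matrix.vecMulVec (ψ - Complex.I • b) (star (ψ - Complex.I • b)) := by
  subst hψ
  set s : ℝ := Real.sqrt v with hsdef
  have hs0 : 0 < s := Real.sqrt_pos.mpr hvpos
  have hsne : (s : ℂ) ≠ 0 := by exact_mod_cast hs0.ne'
  have hs2 : s ^ 2 = v := Real.sq_sqrt hvpos.le
  have hconj : ∀ w, (starRingEnd ℂ) (ψ w) * ψ w = ((‖ψ w‖ ^ 2 : ℝ) : ℂ) := by
    intro w
    rw [mul_comm, Complex.mul_conj']
    norm_cast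
  have hA : (∑ w, ((‖ψ w‖ ^ 2 : ℝ) : ℂ)) = 1 := by
    rw [← Complex.ofReal_sum, hnorm]; norm_num
  have hM1 : (∑ w, ((‖ψ w‖ ^ 2 : ℝ) : ℂ) * (w.val : ℂ)) = (m1 : ℂ) := by
    rw [hm1]; push_cast; rfl
  have part1 : ∑ w, (starRingEnd ℂ) (ψ w) * b w = 0 := by
    subst hb
    have hterm : ∀ w : Fin (N+1),
        (starRingEnd ℂ) (ψ w) * ((ψ w * (w.val : ℂ) - (m1 : ℂ) * ψ w) / (s : ℂ)) =
        (((‖ψ w‖ ^ 2 : ℝ) : ℂ) * (w.val : ℂ)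
          - (m1 : ℂ) * ((‖ψ w‖ ^ 2 : ℝ) : ℂ)) / (s : ℂ) := by
      intro w
      rw [← hconj w]; ring
    simp only
    rw [Finset.sum_congr rfl (fun w _ => hterm w), ← Finset.sum_div,
      Finset.sum_sub_distrib, ← Finset.mul_sum, hM1, hA]
    simp
  have part2 : ∑ w, ‖b w‖ ^ 2 = 1 := by
    have habs : ∀ w : Fin (N+1),
        ‖b w‖ ^ 2 = ‖ψ w‖ ^ 2 * ((w.val : ℝ) - m1) ^ 2 / v := by
      intro w
      have hbw : b w = ψ w * ((((w.val : ℝ) - m1 : ℝ)) : ℂ) / (s : ℂ) := by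
        rw [hb]; push_cast; ring
      rw [hbw, norm_div, norm_mul, Complex.norm_real, Complex.norm_real, Real.norm_eq_abs,
        Real.norm_eq_abs]
      rw [div_pow, mul_pow, sq_abs, abs_of_pos hs0, hs2]
    rw [Finset.sum_congr rfl (fun w _ => habs w), ← Finset.sum_div]
    have hexp : ∑ w, ‖ψ w‖ ^ 2 * ((w.val : ℝ) - m1) ^ 2 = v := by
      have h : ∀ w : Fin (N+1), ‖ψ w‖ ^ 2 * ((w.val : ℝ) - m1) ^ 2 =
          ‖ψ w‖ ^ 2 * (w.val : ℝ) ^ 2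
          - 2 * m1 * (‖ψ w‖ ^ 2 * (w.val : ℝ))
          + m1 ^ 2 * (‖ψ w‖ ^ 2) := by intro w; ring
      rw [Finset.sum_congr rfl (fun w _ => h w), Finset.sum_add_distrib,
        Finset.sum_sub_distrib, ← Finset.mul_sum, ← Finset.mul_sum, ← hm1, ← hm2, hnorm, hv]
      ring
    rw [hexp, div_self hvpos.ne']
  refine ⟨part1, part2, ?_⟩
  subst hJ hL hb
  ext j k
  simp only [Matrix.smul_apply, Matrix.sub_apply, Matrix.mul_diagonal, Matrix.diagonal_mul,
    Matrix.vecMulVec_apply, Pi.star_apply, Pi.add_apply, Pi.sub_apply, Pi.smul_apply,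
    smul_eq_mul, RCLike.star_def, map_add, map_sub, map_mul, map_div₀, Complex.conj_I,
    Complex.conj_ofReal, map_natCast]
  field_simp
  ring
end

section
/- Let n ≥ 1 be a natural number, g a real number, and for θ ∈ ℝ define p₊(θ) = |2^{−n} Σ_{k=0}^n C(n,k) exp(−2 i g k θ)|² and p₋(θ) = |2^{−n} Σ_{k=0}^n C(n,k) (−1)^k exp(−2 i g k θ)|². Then for every θ ∈ ℝ: p₊(θ) = cos^{2n}(gθ) and p₋(θ) = sin^{2n}(gθ); moreover, for every θ with sin(gθ) ≠ 0 and cos(gθ) ≠ 0, the Fisher information (p₊′(θ))²/p₊(θ) + (p₋′(θ))²/p₋(θ) equals 4 g² n² ( sin²(gθ) cos^{2n−2}(gθ) + cos²(gθ) sin^{2n−2}(gθ) ). -/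
open Finset

private lemma binom_sum (n : ℕ) (x : ℂ) :
    ∑ k ∈ Finset.range (n+1), (n.choose k : ℂ) * x^k = (1+x)^n := by
  rw [show (1+x)^n = (x+1)^n by ring, add_pow]
  refine Finset.sum_congr rfl fun k _ => ?_
  simp [mul_comm]

private lemma one_add_exp (y : ℝ) :
    (1 : ℂ) + Complex.exp (-(2*(y:ℂ))*Complex.I)
      = Complex.exp (-(y:ℂ)*Complex.I) * (2 * Complex.cos y) := by
  rw [Complex.cos]
  rw [show (Complex.exp (-(y:ℂ)*Complex.I) * ((2:ℂ) * ((Complex.exp ((y:ℂ)*Complex.I) + Complex.exp (-(y:ℂ)*Complex.I))/2)))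
      = Complex.exp (-(y:ℂ)*Complex.I) * Complex.exp ((y:ℂ)*Complex.I)
        + Complex.exp (-(y:ℂ)*Complex.I) * Complex.exp (-(y:ℂ)*Complex.I) by ring]
  rw [← Complex.exp_add, ← Complex.exp_add]
  rw [show (-(y:ℂ)*Complex.I + (y:ℂ)*Complex.I) = 0 by ring, Complex.exp_zero]
  congr 2
  ring

private lemma one_sub_exp (y : ℝ) :
    (1 : ℂ) - Complex.exp (-(2*(y:ℂ))*Complex.I)
      = Complex.exp (-(y:ℂ)*Complex.I) * (2 * Complex.I * Complex.sin y) := by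
  rw [Complex.sin]
  have hI : (Complex.I : ℂ) * Complex.I = -1 := Complex.I_mul_I
  rw [show (Complex.exp (-(y:ℂ)*Complex.I) * ((2:ℂ) * Complex.I * ((Complex.exp (-(y:ℂ)*Complex.I) - Complex.exp ((y:ℂ)*Complex.I)) * Complex.I / 2)))
      = (Complex.I * Complex.I) * (Complex.exp (-(y:ℂ)*Complex.I) * Complex.exp (-(y:ℂ)*Complex.I)
          - Complex.exp (-(y:ℂ)*Complex.I) * Complex.exp ((y:ℂ)*Complex.I)) by ring, hI]
  rw [← Complex.exp_add, ← Complex.exp_add]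
  rw [show (-(y:ℂ)*Complex.I + (y:ℂ)*Complex.I) = 0 by ring, Complex.exp_zero]
  rw [show (-(y:ℂ)*Complex.I + -(y:ℂ)*Complex.I) = -(2*(y:ℂ))*Complex.I by ring]
  ring

private lemma abs_exp_imag (y : ℝ) :
    ‖Complex.exp (-(y:ℂ)*Complex.I)‖ = 1 := by
  rw [show (-(y:ℂ)*Complex.I) = ((-y : ℝ) : ℂ)*Complex.I by push_cast; ring]
  exact Complex.norm_exp_ofReal_mul_I _

private lemma abs_pow_sq (c : ℝ) (n : ℕ) : (|c| ^ n)^2 = c ^ (2*n) := by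
  rw [← pow_mul, mul_comm n 2, pow_mul, sq_abs, ← pow_mul]

theorem stmt_2 (n : ℕ) (hn : 1 ≤ n) (g : ℝ) (pp pm : ℝ → ℝ)
    (hpp : pp = fun θ : ℝ => ‖(2:ℂ)^(-(n:ℤ)) *
      ∑ k ∈ Finset.range (n+1), (n.choose k : ℂ) *
        Complex.exp (-(2 * (g:ℂ) * (k:ℂ) * (θ:ℂ)) * Complex.I)‖ ^ 2)
    (hpm : pm = fun θ : ℝ => ‖(2:ℂ)^(-(n:ℤ)) *
      ∑ k ∈ Finset.range (n+1), (n.choose k : ℂ) * (-1)^k *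
        Complex.exp (-(2 * (g:ℂ) * (k:ℂ) * (θ:ℂ)) * Complex.I)‖ ^ 2) :
    (∀ θ : ℝ, pp θ = Real.cos (g*θ) ^ (2*n) ∧ pm θ = Real.sin (g*θ) ^ (2*n)) ∧
    (∀ θ : ℝ, Real.sin (g*θ) ≠ 0 → Real.cos (g*θ) ≠ 0 →
      (deriv pp θ)^2 / pp θ + (deriv pm θ)^2 / pm θ
      = 4 * g^2 * (n:ℝ)^2 * (Real.sin (g*θ)^2 * Real.cos (g*θ)^(2*n-2)
          + Real.cos (g*θ)^2 * Real.sin (g*θ)^(2*n-2))) := by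
  have habs2 : ∀ y : ℝ, ((2:ℝ)^(-(n:ℤ)) : ℝ) * (2 * |y|)^n = |y|^n := by
    intro y
    rw [mul_pow, zpow_neg, zpow_natCast]
    field_simp
  have h2abs : ‖(2:ℂ)^(-(n:ℤ))‖ = (2:ℝ)^(-(n:ℤ)) := by
    rw [norm_zpow, Complex.norm_two]
  have hexpk : ∀ θ : ℝ, ∀ k : ℕ,
      Complex.exp (-(2 * (g:ℂ) * (k:ℂ) * (θ:ℂ)) * Complex.I)
        = (Complex.exp (-(2*((g*θ:ℝ):ℂ))*Complex.I))^k := by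
    intro θ k
    rw [← Complex.exp_nat_mul]
    congr 1
    push_cast
    ring
  have hppval : ∀ θ : ℝ, pp θ = Real.cos (g*θ) ^ (2*n) := by
    intro θ
    have hsum : ∑ k ∈ Finset.range (n+1), (n.choose k : ℂ) *
        Complex.exp (-(2 * (g:ℂ) * (k:ℂ) * (θ:ℂ)) * Complex.I)
        = (1 + Complex.exp (-(2*((g*θ:ℝ):ℂ))*Complex.I))^n := by
      rw [← binom_sum]
      exact Finset.sum_congr rfl fun k _ => by rw [hexpk]
    rw [hpp]
    simp only [hsum, one_add_exp (g*θ)]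
    rw [norm_mul, norm_pow, norm_mul, norm_mul, abs_exp_imag, one_mul,
      ← Complex.ofReal_cos, Complex.norm_real, Real.norm_eq_abs, Complex.norm_two, h2abs, habs2,
      abs_pow_sq]
  have hpmval : ∀ θ : ℝ, pm θ = Real.sin (g*θ) ^ (2*n) := by
    intro θ
    have hsum : ∑ k ∈ Finset.range (n+1), (n.choose k : ℂ) * (-1)^k *
        Complex.exp (-(2 * (g:ℂ) * (k:ℂ) * (θ:ℂ)) * Complex.I)
        = (1 - Complex.exp (-(2*((g*θ:ℝ):ℂ))*Complex.I))^n := by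
      rw [sub_eq_add_neg, ← binom_sum]
      refine Finset.sum_congr rfl fun k _ => ?_
      rw [hexpk, neg_pow]
      ring
    rw [hpm]
    simp only [hsum, one_sub_exp (g*θ)]
    rw [norm_mul, norm_pow, norm_mul, norm_mul, norm_mul, abs_exp_imag, Complex.norm_I,
      one_mul, mul_one, ← Complex.ofReal_sin, Complex.norm_real, Real.norm_eq_abs, Complex.norm_two,
      h2abs, habs2, abs_pow_sq]
  refine ⟨fun θ => ⟨hppval θ, hpmval θ⟩, ?_⟩
  intro θ hs hc
  obtain ⟨m, rfl⟩ := Nat.exists_eq_add_of_le hn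
  have hppfun : pp = fun θ : ℝ => Real.cos (g*θ) ^ (2*(1+m)) := funext hppval
  have hpmfun : pm = fun θ : ℝ => Real.sin (g*θ) ^ (2*(1+m)) := funext hpmval
  have hlin : HasDerivAt (fun θ : ℝ => g*θ) g θ := by
    simpa using (hasDerivAt_id θ).const_mul g
  have hdp : HasDerivAt (fun θ : ℝ => Real.cos (g*θ) ^ (2*(1+m)))
      ((2*(1+m) : ℕ) * Real.cos (g*θ) ^ (2*(1+m)-1) * (-Real.sin (g*θ) * g)) θ :=
    (hlin.cos).pow _
  have hdm : HasDerivAt (fun θ : ℝ => Real.sin (g*θ) ^ (2*(1+m)))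
      ((2*(1+m) : ℕ) * Real.sin (g*θ) ^ (2*(1+m)-1) * (Real.cos (g*θ) * g)) θ :=
    (hlin.sin).pow _
  rw [hppfun, hpmfun, hdp.deriv, hdm.deriv]
  simp only []
  have h1 : 2*(1+m) - 1 = 2*m + 1 := by omega
  have h3 : 2*(1+m) - 2 = 2*m := by omega
  have h2 : 2*(1+m) = 2*m + 2 := by omega
  rw [h1, h3, h2]
  push_cast
  field_simp
  ring
end

section
/- Let N and t be natural numbers with 1 ≤ t ≤ N. Work with vectors indexed by pairs (u, y) where u : Fin t → Bool and y : Fin (N−t) → Bool; write wt(x) for the number of true entries of a Boolean string x. For 0 ≤ w ≤ N define the Dicke vector D^N_w by D^N_w(u,y) = C(N,w)^{−1/2} if wt(u)+wt(y) = w and 0 otherwise, and for 0 ≤ v ≤ N−t define D^{N−t}_v(y) = C(N−t,v)^{−1/2} if wt(y) = v and 0 otherwise. Let a : {0,…,N} → ℂ and ψ = Σ_{w=0}^N a_w D^N_w. For 0 ≤ a ≤ t set ψ_a = Σ_{w=a}^{N−t+a} a_w √( C(N−t, w−a) / C(N, w) ) D^{N−t}_{w−a}. Then the partial trace over the first t qubits,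 defined entrywise by (Tr_t M)(y, y′) = Σ_{u : Fin t → Bool} M((u,y), (u,y′)), satisfies Tr_t(ψψ*) = Σ_{a=0}^t C(t,a) · ψ_a ψ_a*, where x x* denotes the outer-product matrix (x x*)_{jk} = x_j conj(x_k). -/
open Finset

/-- Hamming weight of a Boolean string. -/
def wtBool {m : ℕ} (x : Fin m → Bool) : ℕ :=
  (Finset.univ.filter (fun i => x i = true)).card

/-- The N-qubit Dicke vector of weight `w`, with the qubits split into the
first `t` and the remaining `N - t`. -/
noncomputable def dickeSplit (N t w : ℕ) :
    ((Fin t → Bool) × (Fin (N - t) → Bool)) → ℂ :=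
  fun p => if wtBool p.1 + wtBool p.2 = w then ((1 / Real.sqrt (N.choose w) : ℝ) : ℂ) else 0

/-- The (N - t)-qubit Dicke vector of weight `v`. -/
noncomputable def dickeSmall (m v : ℕ) : (Fin m → Bool) → ℂ :=
  fun y => if wtBool y = v then ((1 / Real.sqrt (m.choose v) : ℝ) : ℂ) else 0

lemma wtBool_le {m : ℕ} (x : Fin m → Bool) : wtBool x ≤ m := by
  simpa [wtBool] using (Finset.card_filter_le Finset.univ _).trans_eq (by simp)

lemma sum_wt {m : ℕ} (f : ℕ → ℂ) :
    ∑ u : Fin m → Bool, f (wtBool u) =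
      ∑ α ∈ Finset.range (m + 1), (m.choose α : ℂ) * f α := by
  classical
  have e : ∑ u : Fin m → Bool, f (wtBool u) = ∑ s : Finset (Fin m), f s.card := by
    apply Fintype.sum_bijective (fun u : Fin m → Bool => Finset.univ.filter (fun i => u i = true))
    · constructor
      · intro u v h
        funext i
        have := Finset.ext_iff.mp h i
        simp at this
        by_cases hu : u i <;> by_cases hv : v i <;> simp_all
      · intro s
        refine ⟨fun i => i ∈ s, ?_⟩
        ext i; simp
    · intro u; rfl
  rw [e]
  have : (Finset.univ : Finset (Finset (Fin m))) = (Finset.univ : Finset (Fin m)).powerset := by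
    simp
  rw [this, Finset.sum_powerset_apply_card, Finset.card_univ, Fintype.card_fin]
  simp [nsmul_eq_mul]

lemma psi_val (N t : ℕ) (ht2 : t ≤ N) (a : ℕ → ℂ)
    (u : Fin t → Bool) (y : Fin (N - t) → Bool) :
    ∑ w ∈ Finset.range (N+1), a w * dickeSplit N t w (u, y) =
      a (wtBool u + wtBool y) *
        ((1 / Real.sqrt (N.choose (wtBool u + wtBool y)) : ℝ) : ℂ) := by
  have hle : wtBool u + wtBool y ≤ N := by
    have := Nat.add_le_add (wtBool_le u) (wtBool_le y)
    omega
  rw [Finset.sum_eq_single (wtBool u + wtBool y)]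
  · simp [dickeSplit]
  · intro w _ hw
    simp [dickeSplit, hw.symm]
  · intro h
    exact absurd (Finset.mem_range.mpr (by omega)) h

lemma psia_val (N t : ℕ) (ht2 : t ≤ N) (a : ℕ → ℂ) (α : ℕ)
    (y : Fin (N - t) → Bool) :
    ∑ w ∈ Finset.Icc α (N - t + α),
      a w * ((Real.sqrt (((N - t).choose (w - α) : ℝ) / (N.choose w : ℝ)) : ℝ) : ℂ) *
        dickeSmall (N - t) (w - α) y =
      a (α + wtBool y) *
        ((1 / Real.sqrt (N.choose (α + wtBool y)) : ℝ) : ℂ) := by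
  have hv : wtBool y ≤ N - t := wtBool_le y
  rw [Finset.sum_eq_single (α + wtBool y)]
  · have h1 : α + wtBool y - α = wtBool y := by omega
    have hpos : (0 : ℝ) < ((N - t).choose (wtBool y) : ℝ) := by
      exact_mod_cast Nat.choose_pos hv
    simp only [dickeSmall, h1, if_pos rfl]
    rw [Real.sqrt_div (by positivity), if_pos trivial, mul_assoc, ← Complex.ofReal_mul]
    congr 2
    have h2 : Real.sqrt ((N - t).choose (wtBool y) : ℝ) ≠ 0 := by positivity
    field_simp
  · intro w hw hne
    have hα : α ≤ w := (Finset.mem_Icc.mp hw).1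
    have : wtBool y ≠ w - α := by omega
    simp [dickeSmall, this]
  · intro h
    exact absurd (Finset.mem_Icc.mpr (by omega)) h

theorem stmt_3 (N t : ℕ) (ht1 : 1 ≤ t) (ht2 : t ≤ N)
    (a : ℕ → ℂ)
    (ψ : ((Fin t → Bool) × (Fin (N - t) → Bool)) → ℂ)
    (hψ : ψ = fun p => ∑ w ∈ Finset.range (N+1), a w * dickeSplit N t w p)
    (ψa : ℕ → (Fin (N - t) → Bool) → ℂ)
    (hψa : ∀ α : ℕ, ψa α = fun y => ∑ w ∈ Finset.Icc α (N - t + α),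
      a w * ((Real.sqrt (((N - t).choose (w - α) : ℝ) / (N.choose w : ℝ)) : ℝ) : ℂ) *
        dickeSmall (N - t) (w - α) y) :
    (fun y y' : Fin (N - t) → Bool =>
        ∑ u : Fin t → Bool, ψ (u, y) * (starRingEnd ℂ) (ψ (u, y')))
    = fun y y' : Fin (N - t) → Bool =>
        ∑ α ∈ Finset.range (t+1), (t.choose α : ℂ) * (ψa α y * (starRingEnd ℂ) (ψa α y')) := by
  funext y y'
  have hψv : ∀ (u : Fin t → Bool) (z : Fin (N - t) → Bool),
      ψ (u, z) = a (wtBool u + wtBool z) *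
        ((1 / Real.sqrt (N.choose (wtBool u + wtBool z)) : ℝ) : ℂ) := by
    intro u z; rw [hψ]; exact psi_val N t ht2 a u z
  have hψav : ∀ (α : ℕ) (z : Fin (N - t) → Bool),
      ψa α z = a (α + wtBool z) *
        ((1 / Real.sqrt (N.choose (α + wtBool z)) : ℝ) : ℂ) := by
    intro α z; rw [hψa]; exact psia_val N t ht2 a α z
  have key := sum_wt (m := t) (fun α =>
    (a (α + wtBool y) * ((1 / Real.sqrt (N.choose (α + wtBool y)) : ℝ) : ℂ)) *
    (starRingEnd ℂ)
      (a (α + wtBool y') * ((1 / Real.sqrt (N.choose (α + wtBool y')) : ℝ) : ℂ)))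
  simp only [hψv, hψav]
  exact key
end

section
/- Fix a natural number N ≥ 1 and γ ∈ [0,1]. Work with matrices indexed by functions Fin N → Fin 2. Let A₀ be the 2×2 matrix with (A₀)_{00} = 1, (A₀)_{11} = √(1−γ) and zeros elsewhere, and A₁ the 2×2 matrix with (A₁)_{01} = √γ and zeros elsewhere. For x : Fin N → Fin 2, let A_x be the tensor-product matrix (A_x)(y,z) = Π_{i} (A_{x(i)})_{y(i), z(i)}. Write wt(y) for the number of indices i with y(i) = 1, and for 0 ≤ w ≤ N let D^N_w(y) = C(N,w)^{−1/2} if wt(y) = w and 0 otherwise. Let a : {0,…,N} → ℂ and ψ = Σ_{w=0}^N a_w D^N_w. For a subset P ⊆ Fin N with |P| = p and a matrix M indexed by functions (Fin N ∖ P) → Fin 2, define the insertion Ins_P(M) as the matrix indexed by Fin N → Fin 2 with Ins_P(M)(y,z) = M(y restricted to Fin N ∖ P, z restricted to Fin N ∖ P) if y(i) = z(i) = 0 for all i ∈ P, and 0 otherwise. For 0 ≤ p ≤ N and a set S of size N−p, define the vector φ_{p,S} indexed by S → Fin 2 by φ_{p,S} = Σ_{w=p}^{N} a_w √( C(w,p)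 γ^p (1−γ)^{w−p} ) D^{S}_{w−p}, where D^S_v(y) = C(N−p, v)^{−1/2} if wt(y) = v and 0 otherwise. Then Σ_{x : Fin N → Fin 2} A_x (ψψ*) A_x† = Σ_{p=0}^{N} C(N,p)^{−1} Σ_{P ⊆ Fin N, |P| = p} Ins_P( φ_{p, Fin N ∖ P} · φ_{p, Fin N ∖ P}* ). -/
open Finset Matrix

/-- Hamming weight: the number of indices at which the string equals `1`. -/
def wtF {α : Type*} [Fintype α] [DecidableEq α] (y : α → Fin 2) : ℕ :=
  (Finset.univ.filter (fun i => y i = 1)).card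

/-- The single-qubit amplitude-damping Kraus operators `A₀`, `A₁`. -/
noncomputable def adKraus (γ : ℝ) : Fin 2 → Matrix (Fin 2) (Fin 2) ℂ :=
  ![!![1, 0; 0, ((Real.sqrt (1 - γ) : ℝ) : ℂ)],
    !![0, ((Real.sqrt γ : ℝ) : ℂ); 0, 0]]

/-- The tensor-product Kraus operator `A_x = A_{x 1} ⊗ ⋯ ⊗ A_{x N}`. -/
noncomputable def adKrausN (N : ℕ) (γ : ℝ) (x : Fin N → Fin 2) :
    Matrix (Fin N → Fin 2) (Fin N → Fin 2) ℂ :=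
  Matrix.of fun y z => ∏ i, adKraus γ (x i) (y i) (z i)

/-- The `N`-qubit Dicke vector of weight `w`. -/
noncomputable def dickeVec (N w : ℕ) : (Fin N → Fin 2) → ℂ :=
  fun y => if wtF y = w then ((1 / Real.sqrt (N.choose w) : ℝ) : ℂ) else 0

/-- Insertion of `|0⟩` states in the positions labelled by `P`. -/
def insP {N : ℕ} (P : Finset (Fin N))
    (M : Matrix ({i : Fin N // i ∉ P} → Fin 2) ({i : Fin N // i ∉ P} → Fin 2) ℂ) :
    Matrix (Fin N → Fin 2) (Fin N → Fin 2) ℂ :=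
  Matrix.of fun y z =>
    if (∀ i ∈ P, y i = 0 ∧ z i = 0) then
      M (fun i => y i.val) (fun i => z i.val) else 0

/-- The sub-normalized symmetric state `φ_{p,S}` on the qubits outside `P`. -/
noncomputable def phiVec (N : ℕ) (γ : ℝ) (a : ℕ → ℂ) (P : Finset (Fin N)) :
    ({i : Fin N // i ∉ P} → Fin 2) → ℂ :=
  fun y => ∑ w ∈ Finset.Icc P.card N,
    a w * ((Real.sqrt ((w.choose P.card : ℝ) * γ ^ P.card * (1 - γ) ^ (w - P.card)) : ℝ) : ℂ) *
      (if wtF y = w - P.card then ((1 / Real.sqrt ((N - P.card).choose (w - P.card)) : ℝ) : ℂ) else 0)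

lemma fin2_cases (b : Fin 2) : b = 0 ∨ b = 1 := by omega

/-- characteristic vector -/
def chi {N : ℕ} (P : Finset (Fin N)) : Fin N → Fin 2 := fun i => if i ∈ P then 1 else 0

lemma chi_eq_one_iff {N : ℕ} (P : Finset (Fin N)) (i : Fin N) : chi P i = 1 ↔ i ∈ P := by
  unfold chi; by_cases h : i ∈ P <;> simp [h]

lemma chi_bijective (N : ℕ) : Function.Bijective (chi (N := N)) := by
  constructor
  · intro P Q h
    ext i
    rw [← chi_eq_one_iff P i, ← chi_eq_one_iff Q i, h]
  · intro x
    refine ⟨Finset.univ.filter (fun i => x i = 1), ?_⟩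
    ext i
    rcases fin2_cases (x i) with h | h <;> simp [chi, h]

lemma wtF_chi {N : ℕ} (P : Finset (Fin N)) : wtF (chi P) = P.card := by
  unfold wtF
  congr 1
  ext i
  simp [chi_eq_one_iff]

/-- or of x and y -/
def ors {N : ℕ} (x y : Fin N → Fin 2) : Fin N → Fin 2 := fun i => if x i = 1 then 1 else y i

lemma wtF_le {N : ℕ} (y : Fin N → Fin 2) : wtF y ≤ N := by
  classical
  calc wtF y ≤ (Finset.univ : Finset (Fin N)).card := Finset.card_filter_le _ _
  _ = N := by simp

lemma wtF_ors_chi {N : ℕ} (P : Finset (Fin N)) (y : Fin N → Fin 2)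
    (hy : ∀ i ∈ P, y i = 0) : wtF (ors (chi P) y) = P.card + wtF y := by
  unfold wtF
  have : (Finset.univ.filter (fun i => ors (chi P) y i = 1)) =
      P ∪ Finset.univ.filter (fun i => y i = 1) := by
    ext i
    by_cases h : i ∈ P
    · simp [h, ors, chi_eq_one_iff, (chi_eq_one_iff P i).mpr h]
    · have : chi P i = 0 := by
        rcases fin2_cases (chi P i) with h2 | h2
        · exact h2
        · exact absurd ((chi_eq_one_iff P i).mp h2) h
      simp [h, ors, this]
  have hd : Disjoint P (Finset.univ.filter (fun i => y i = 1)) :=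
    Finset.disjoint_left.mpr fun i hiP hif => by simp [hy i hiP] at hif
  rw [this, Finset.card_union_of_disjoint hd]

lemma adKraus_factor {γ : ℝ} {x y : Fin N → Fin 2} (i : Fin N) (h : x i = 1 → y i = 0) :
    adKraus γ (x i) (y i) (ors x y i) =
      ((Real.sqrt γ : ℝ) : ℂ) ^ (if x i = 1 then 1 else 0) *
      ((Real.sqrt (1 - γ) : ℝ) : ℂ) ^ (if y i = 1 then 1 else 0) := by
  rcases fin2_cases (x i) with hx | hx
  · rcases fin2_cases (y i) with hy | hy <;> simp [adKraus, ors, hx, hy]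
  · have hy := h hx
    simp [adKraus, ors, hx, hy]

lemma adKraus_zero_of_ne {γ : ℝ} {x y u : Fin N → Fin 2} (i : Fin N)
    (h : x i = 1 → y i = 0) (hne : u i ≠ ors x y i) :
    adKraus γ (x i) (y i) (u i) = 0 := by
  rcases fin2_cases (x i) with hx | hx
  · have : ors x y i = y i := by simp [ors, hx]
    rw [this] at hne
    rcases fin2_cases (y i) with hy | hy <;> rcases fin2_cases (u i) with hu | hu <;>
      simp_all [adKraus]
  · have hy := h hx
    have : ors x y i = 1 := by simp [ors, hx]
    rw [this] at hne
    have hu : u i = 0 := by rcases fin2_cases (u i) with hu | hu; exact hu; exact absurd hu hne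
    simp [adKraus, hx, hy, hu]

lemma adKraus_one_one {γ : ℝ} (b : Fin 2) : adKraus γ 1 1 b = 0 := by
  rcases fin2_cases b with h | h <;> simp [adKraus, h]

lemma mulVec_adKrausN (N : ℕ) (γ : ℝ) (x y : Fin N → Fin 2) (ψ : (Fin N → Fin 2) → ℂ) :
    (adKrausN N γ x).mulVec ψ y =
      if ∀ i, x i = 1 → y i = 0 then
        ((Real.sqrt γ : ℝ) : ℂ) ^ (wtF x) * ((Real.sqrt (1 - γ) : ℝ) : ℂ) ^ (wtF y) *
          ψ (ors x y)
      else 0 := by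
  unfold Matrix.mulVec dotProduct
  by_cases h : ∀ i, x i = 1 → y i = 0
  · rw [if_pos h]
    rw [Finset.sum_eq_single (ors x y)]
    · have : (adKrausN N γ x) y (ors x y) =
          ((Real.sqrt γ : ℝ) : ℂ) ^ (wtF x) * ((Real.sqrt (1 - γ) : ℝ) : ℂ) ^ (wtF y) := by
        show (∏ i, adKraus γ (x i) (y i) (ors x y i)) = _
        rw [Finset.prod_congr rfl (fun i _ => adKraus_factor i (h i))]
        rw [Finset.prod_mul_distrib, Finset.prod_pow_eq_pow_sum, Finset.prod_pow_eq_pow_sum]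
        congr 1
        · congr 1
          rw [wtF, Finset.card_filter]
        · congr 1
          rw [wtF, Finset.card_filter]
      show adKrausN N γ x y (ors x y) * ψ (ors x y) = _
      rw [this]
    · intro u _ hu
      have : ∃ i, u i ≠ ors x y i := by
        by_contra hc
        push_neg at hc
        exact hu (funext hc)
      obtain ⟨i, hi⟩ := this
      apply mul_eq_zero_of_left
      exact Finset.prod_eq_zero (Finset.mem_univ i) (adKraus_zero_of_ne i (h i) hi)
    · intro hni
      exact absurd (Finset.mem_univ _) hni
  · rw [if_neg h]
    push_neg at h
    obtain ⟨i, hx1, hy⟩ := h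
    have hy1 : y i = 1 := by rcases fin2_cases (y i) with h2 | h2; exact absurd h2 hy; exact h2
    apply Finset.sum_eq_zero
    intro u _
    apply mul_eq_zero_of_left
    apply Finset.prod_eq_zero (Finset.mem_univ i)
    rw [hx1, hy1]
    exact adKraus_one_one _

lemma entry_eq {m : Type*} [Fintype m] [DecidableEq m] (A : Matrix m m ℂ) (ψ : m → ℂ)
    (y z : m) :
    (A * Matrix.vecMulVec ψ (star ψ) * Aᴴ) y z =
      (A.mulVec ψ y) * (starRingEnd ℂ) (A.mulVec ψ z) := by
  have : (A * Matrix.vecMulVec ψ (star ψ) * Aᴴ) y z =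
      ∑ k, ∑ j, (A y j * ψ j) * (starRingEnd ℂ) (A z k * ψ k) := by
    simp only [Matrix.mul_apply, Matrix.vecMulVec_apply, Matrix.conjTranspose_apply,
      Pi.star_apply, Finset.sum_mul]
    refine Finset.sum_congr rfl fun k _ => Finset.sum_congr rfl fun j _ => ?_
    simp only [RCLike.star_def, _root_.map_mul]
    ring
  rw [this, Finset.sum_comm]
  simp only [Matrix.mulVec, dotProduct, map_sum]
  exact (Finset.sum_mul_sum _ _ _ _).symm

lemma psi_eval (N : ℕ) (a : ℕ → ℂ) (u : Fin N → Fin 2) :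
    (∑ w ∈ Finset.range (N+1), a w * dickeVec N w u) =
      a (wtF u) * ((1 / Real.sqrt (N.choose (wtF u)) : ℝ) : ℂ) := by
  rw [Finset.sum_eq_single (wtF u)]
  · simp [dickeVec]
  · intro w _ hw
    simp [dickeVec, Ne.symm hw]
  · intro hni
    exact absurd (Finset.mem_range.mpr (Nat.lt_succ_of_le (wtF_le u))) hni

lemma phiVec_eval (N : ℕ) (γ : ℝ) (a : ℕ → ℂ) (P : Finset (Fin N))
    (y : {i : Fin N // i ∉ P} → Fin 2) (h : P.card + wtF y ≤ N) :
    phiVec N γ a P y =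
      a (P.card + wtF y) *
        ((Real.sqrt (((P.card + wtF y).choose P.card : ℝ) * γ ^ P.card * (1 - γ) ^ (wtF y)) : ℝ) : ℂ) *
        ((1 / Real.sqrt ((N - P.card).choose (wtF y)) : ℝ) : ℂ) := by
  unfold phiVec
  rw [Finset.sum_eq_single (P.card + wtF y)]
  · simp
  · intro w hw hne
    rw [Finset.mem_Icc] at hw
    have : wtF y ≠ w - P.card := by omega
    simp [this]
  · intro hni
    exact absurd (Finset.mem_Icc.mpr ⟨Nat.le_add_right _ _, h⟩) hni

lemma wtF_restrict {N : ℕ} (P : Finset (Fin N)) (y : Fin N → Fin 2)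
    (hy : ∀ i ∈ P, y i = 0) :
    wtF (fun i : {i : Fin N // i ∉ P} => y i.val) = wtF y := by
  unfold wtF
  apply Finset.card_bij (fun (a : {i : Fin N // i ∉ P}) _ => a.val)
  · intro a ha
    simp only [Finset.mem_filter, Finset.mem_univ, true_and] at ha ⊢
    exact ha
  · intro a _ b _ hab
    exact Subtype.ext hab
  · intro b hb
    simp only [Finset.mem_filter, Finset.mem_univ, true_and] at hb
    have hbP : b ∉ P := fun hc => by simp [hy b hc] at hb
    exact ⟨⟨b, hbP⟩, by simp [hb], rfl⟩

lemma sqrt_pow' {x : ℝ} (hx : 0 ≤ x) (n : ℕ) : Real.sqrt (x ^ n) = Real.sqrt x ^ n := by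
  conv_lhs => rw [← Real.mul_self_sqrt hx]
  rw [mul_pow, Real.sqrt_mul_self (pow_nonneg (Real.sqrt_nonneg x) n)]

lemma sqrt_choose {N p k : ℕ} (h : p + k ≤ N) :
    Real.sqrt (N.choose p) * Real.sqrt ((N - p).choose k) =
      Real.sqrt ((p + k).choose p) * Real.sqrt (N.choose (p + k)) := by
  rw [← Real.sqrt_mul (Nat.cast_nonneg _), ← Real.sqrt_mul (Nat.cast_nonneg _)]
  congr 1
  have := Nat.choose_mul (n := N) (Nat.le_add_right p k)
  rw [Nat.add_sub_cancel_left] at this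
  exact_mod_cast (by rw [mul_comm ((p+k).choose p : ℕ)]; exact this.symm :
    N.choose p * (N - p).choose k = ((p + k).choose p) * N.choose (p + k))

lemma keyR (N p k : ℕ) (γ : ℝ) (hγ0 : 0 ≤ γ) (hγ1 : γ ≤ 1) (hpk : p + k ≤ N) :
    Real.sqrt γ ^ p * Real.sqrt (1 - γ) ^ k * (1 / Real.sqrt (N.choose (p + k)))
    = (1 / Real.sqrt (N.choose p)) *
        Real.sqrt (((p + k).choose p : ℝ) * γ ^ p * (1 - γ) ^ k) *
        (1 / Real.sqrt ((N - p).choose k)) := by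
  have hβ : (0:ℝ) ≤ 1 - γ := by linarith
  rw [Real.sqrt_mul (by positivity), Real.sqrt_mul (Nat.cast_nonneg _),
    sqrt_pow' hγ0, sqrt_pow' hβ]
  have h1 : (0:ℝ) < Real.sqrt (N.choose (p + k)) :=
    Real.sqrt_pos.mpr (by exact_mod_cast Nat.choose_pos hpk)
  have h2 : (0:ℝ) < Real.sqrt (N.choose p) :=
    Real.sqrt_pos.mpr (by exact_mod_cast Nat.choose_pos (le_trans (Nat.le_add_right p k) hpk))
  have h4 : (0:ℝ) < Real.sqrt ((N - p).choose k) :=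
    Real.sqrt_pos.mpr (by exact_mod_cast Nat.choose_pos (by omega))
  have hc := sqrt_choose hpk
  field_simp
  rw [mul_assoc (Real.sqrt γ ^ p * Real.sqrt (1 - γ) ^ k), hc]
  ring

lemma keyC (N p k : ℕ) (γ : ℝ) (hγ0 : 0 ≤ γ) (hγ1 : γ ≤ 1) (hpk : p + k ≤ N) :
    ((Real.sqrt γ : ℝ) : ℂ) ^ p * ((Real.sqrt (1 - γ) : ℝ) : ℂ) ^ k *
        ((1 / Real.sqrt (N.choose (p + k)) : ℝ) : ℂ)
    = ((1 / Real.sqrt (N.choose p) : ℝ) : ℂ) *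
        ((Real.sqrt (((p + k).choose p : ℝ) * γ ^ p * (1 - γ) ^ k) : ℝ) : ℂ) *
        ((1 / Real.sqrt ((N - p).choose k) : ℝ) : ℂ) := by
  rw [← Complex.ofReal_pow, ← Complex.ofReal_pow, ← Complex.ofReal_mul, ← Complex.ofReal_mul,
    ← Complex.ofReal_mul, ← Complex.ofReal_mul]
  exact congrArg _ (keyR N p k γ hγ0 hγ1 hpk)

lemma hCp_lemma (N p : ℕ) (hp : p ≤ N) :
    ((N.choose p : ℂ))⁻¹ =
      ((1 / Real.sqrt (N.choose p) : ℝ) : ℂ) * ((1 / Real.sqrt (N.choose p) : ℝ) : ℂ) := by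
  rw [← Complex.ofReal_mul, div_mul_div_comm, one_mul,
    Real.mul_self_sqrt (Nat.cast_nonneg _)]
  rw [one_div, Complex.ofReal_inv]
  norm_num

theorem stmt_4 (N : ℕ) (hN : 1 ≤ N) (γ : ℝ) (hγ0 : 0 ≤ γ) (hγ1 : γ ≤ 1)
    (a : ℕ → ℂ) (ψ : (Fin N → Fin 2) → ℂ)
    (hψ : ψ = fun y => ∑ w ∈ Finset.range (N+1), a w * dickeVec N w y) :
    ∑ x : Fin N → Fin 2, adKrausN N γ x * Matrix.vecMulVec ψ (star ψ) * (adKrausN N γ x)ᴴ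
    = ∑ p ∈ Finset.range (N+1), ((N.choose p : ℂ))⁻¹ •
        ∑ P ∈ Finset.powersetCard p (Finset.univ : Finset (Fin N)),
          insP P (Matrix.vecMulVec (phiVec N γ a P) (star (phiVec N γ a P))) := by
  have hcomm : ∀ (F : (Fin N → Fin 2) → ℂ), (∑ x : Fin N → Fin 2, F x)
      = ∑ p ∈ Finset.range (N+1),
          ∑ P ∈ Finset.powersetCard p (Finset.univ : Finset (Fin N)), F (chi P) := by
    intro F
    rw [← Fintype.sum_bijective chi (chi_bijective N) (fun P => F (chi P)) F (fun _ => rfl)]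
    rw [← Finset.powerset_univ, Finset.sum_powerset]
    simp
  ext y z
  simp only [Matrix.sum_apply, Matrix.smul_apply, smul_eq_mul]
  have hent : ∀ x : Fin N → Fin 2,
      (adKrausN N γ x * Matrix.vecMulVec ψ (star ψ) * (adKrausN N γ x)ᴴ) y z
      = ((adKrausN N γ x).mulVec ψ y) * (starRingEnd ℂ) ((adKrausN N γ x).mulVec ψ z) :=
    fun x => entry_eq _ _ _ _
  simp only [hent, mulVec_adKrausN]
  rw [hcomm]
  refine Finset.sum_congr rfl fun p hp => ?_
  rw [Finset.mul_sum]
  refine Finset.sum_congr rfl fun P hP => ?_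
  have hPp : P.card = p := Finset.mem_powersetCard_univ.mp hP
  subst hPp
  have hcondY : (∀ i, chi P i = 1 → y i = 0) ↔ (∀ i ∈ P, y i = 0) := by
    constructor
    · intro h i hi
      exact h i ((chi_eq_one_iff P i).mpr hi)
    · intro h i hi
      exact h i ((chi_eq_one_iff P i).mp hi)
  have hcondZ : (∀ i, chi P i = 1 → z i = 0) ↔ (∀ i ∈ P, z i = 0) := by
    constructor
    · intro h i hi
      exact h i ((chi_eq_one_iff P i).mpr hi)
    · intro h i hi
      exact h i ((chi_eq_one_iff P i).mp hi)
  by_cases hY : ∀ i ∈ P, y i = 0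
  · by_cases hZ : ∀ i ∈ P, z i = 0
    · -- main case
      rw [if_pos (hcondY.mpr hY), if_pos (hcondZ.mpr hZ)]
      have hpk : P.card + wtF y ≤ N := by
        rw [← wtF_ors_chi P y hY]; exact wtF_le _
      have hpl : P.card + wtF z ≤ N := by
        rw [← wtF_ors_chi P z hZ]; exact wtF_le _
      have hψy : ψ (ors (chi P) y) = a (P.card + wtF y) *
          ((1 / Real.sqrt (N.choose (P.card + wtF y)) : ℝ) : ℂ) := by
        simp only [hψ]
        rw [psi_eval, wtF_ors_chi P y hY]
      have hψz : ψ (ors (chi P) z) = a (P.card + wtF z) *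
          ((1 / Real.sqrt (N.choose (P.card + wtF z)) : ℝ) : ℂ) := by
        simp only [hψ]
        rw [psi_eval, wtF_ors_chi P z hZ]
      have hins : insP P (Matrix.vecMulVec (phiVec N γ a P) (star (phiVec N γ a P))) y z
          = phiVec N γ a P (fun i => y i.val) *
            (starRingEnd ℂ) (phiVec N γ a P (fun i => z i.val)) := by
        show (if (∀ i ∈ P, y i = 0 ∧ z i = 0) then _ else 0) = _
        rw [if_pos (fun i hi => ⟨hY i hi, hZ i hi⟩)]
        simp [Matrix.vecMulVec_apply, Pi.star_apply, RCLike.star_def]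
      rw [hins, wtF_chi, hψy, hψz]
      rw [phiVec_eval N γ a P _ (by rw [wtF_restrict P y hY]; exact hpk),
        phiVec_eval N γ a P _ (by rw [wtF_restrict P z hZ]; exact hpl),
        wtF_restrict P y hY, wtF_restrict P z hZ]
      simp only [_root_.map_mul, _root_.map_pow, Complex.conj_ofReal]
      rw [hCp_lemma N P.card (le_trans (Nat.le_add_right _ _) hpk)]
      have hk := keyC N P.card (wtF y) γ hγ0 hγ1 hpk
      have hl := keyC N P.card (wtF z) γ hγ0 hγ1 hpl
      linear_combination
        (a (P.card + wtF y) * (starRingEnd ℂ) (a (P.card + wtF z)) *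
          (((Real.sqrt γ : ℝ) : ℂ) ^ P.card * ((Real.sqrt (1 - γ) : ℝ) : ℂ) ^ (wtF z) *
            ((1 / Real.sqrt (N.choose (P.card + wtF z)) : ℝ) : ℂ))) * hk +
        (a (P.card + wtF y) * (starRingEnd ℂ) (a (P.card + wtF z)) *
          (((1 / Real.sqrt (N.choose P.card) : ℝ) : ℂ) *
            ((Real.sqrt (((P.card + wtF y).choose P.card : ℝ) * γ ^ P.card *
              (1 - γ) ^ (wtF y)) : ℝ) : ℂ) *
            ((1 / Real.sqrt ((N - P.card).choose (wtF y)) : ℝ) : ℂ))) * hl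
    · -- z fails
      have hins : insP P (Matrix.vecMulVec (phiVec N γ a P) (star (phiVec N γ a P))) y z = 0 := by
        show (if (∀ i ∈ P, y i = 0 ∧ z i = 0) then _ else 0) = 0
        rw [if_neg (fun h => hZ (fun i hi => (h i hi).2))]
      rw [hins, if_neg (fun h => hZ (hcondZ.mp h)), map_zero, mul_zero, mul_zero]
  · have hins : insP P (Matrix.vecMulVec (phiVec N γ a P) (star (phiVec N γ a P))) y z = 0 := by
      show (if (∀ i ∈ P, y i = 0 ∧ z i = 0) then _ else 0) = 0
      rw [if_neg (fun h => hY (fun i hi => (h i hi).1))]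
    rw [hins, if_neg (fun h => hY (hcondY.mp h)), zero_mul, mul_zero]
end

section
/- Fix natural numbers N ≥ 1 and t ≥ 0, and work with matrices over ℂ indexed by functions Fin N → Fin 2. For a permutation σ of Fin N let P_σ be the permutation matrix with P_σ(x, y) = 1 if x = y ∘ σ and 0 otherwise. Say a matrix M is supported on a set S ⊆ Fin N if there is a matrix m indexed by functions S → Fin 2 such that M(x,y) = m(x|_S, y|_S) when x(i) = y(i) for every i ∉ S, and M(x,y) = 0 otherwise; say M has weight at most t if it is supported on some S with |S| ≤ t. Let Π be a matrix such that Π P_σ = P_σ Π = Π for every permutation σ of Fin N, and suppose that for all matrices A, B of weight at most t there exists c ∈ ℂ with Π A† B Π = c · Π. Then for all matrices A, B of weight at most t and all permutations σ, τ of Fin N, there exists g ∈ ℂ with Π A† P_σ† P_τ B Π = g · Π. -/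
open Finset Matrix

def SupportedOn (N : ℕ) (S : Finset (Fin N))
    (M : Matrix (Fin N → Fin 2) (Fin N → Fin 2) ℂ) : Prop :=
  ∃ m : Matrix ({i : Fin N // i ∈ S} → Fin 2) ({i : Fin N // i ∈ S} → Fin 2) ℂ,
    ∀ x y : Fin N → Fin 2,
      M x y = if ∀ i ∉ S, x i = y i then m (fun i => x i.val) (fun i => y i.val) else 0

def WeightAtMost (N t : ℕ) (M : Matrix (Fin N → Fin 2) (Fin N → Fin 2) ℂ) : Prop :=
  ∃ S : Finset (Fin N), S.card ≤ t ∧ SupportedOn N S M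

def permMatrix (N : ℕ) (σ : Equiv.Perm (Fin N)) :
    Matrix (Fin N → Fin 2) (Fin N → Fin 2) ℂ :=
  Matrix.of fun x y => if x = y ∘ σ then 1 else 0

lemma permMatrix_conjTranspose (N : ℕ) (σ : Equiv.Perm (Fin N)) :
    (permMatrix N σ)ᴴ = permMatrix N σ⁻¹ := by
  ext x y
  simp only [conjTranspose_apply, permMatrix, Matrix.of_apply]
  have : (y = x ∘ ⇑σ) ↔ (x = y ∘ ⇑σ⁻¹) := by
    constructor
    · rintro rfl; ext i; simp
    · rintro rfl; ext i; simp
  by_cases h : x = y ∘ ⇑σ⁻¹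
  · rw [if_pos (this.mpr h), if_pos h, star_one]
  · rw [if_neg (fun hy => h (this.mp hy)), if_neg h, star_zero]

lemma permMatrix_mul (N : ℕ) (σ τ : Equiv.Perm (Fin N)) :
    permMatrix N σ * permMatrix N τ = permMatrix N (σ.trans τ) := by
  ext x y
  rw [Matrix.mul_apply]
  simp only [permMatrix, Matrix.of_apply]
  rw [Finset.sum_eq_single (y ∘ ⇑τ)]
  · simp [Function.comp_assoc]
    rfl
  · intro z _ hz
    simp [hz]
  · intro h
    exact absurd (Finset.mem_univ _) h

lemma mul_permMatrix_apply (N : ℕ) (ρ : Equiv.Perm (Fin N))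
    (B : Matrix (Fin N → Fin 2) (Fin N → Fin 2) ℂ) (x y : Fin N → Fin 2) :
    (B * permMatrix N ρ) x y = B x (y ∘ ⇑ρ) := by
  rw [Matrix.mul_apply]
  simp only [permMatrix, Matrix.of_apply]
  rw [Finset.sum_eq_single (y ∘ ⇑ρ)] <;> simp +contextual

lemma permMatrix_mul_apply (N : ℕ) (ρ : Equiv.Perm (Fin N))
    (B : Matrix (Fin N → Fin 2) (Fin N → Fin 2) ℂ) (x y : Fin N → Fin 2) :
    (permMatrix N ρ * B) x y = B (x ∘ ⇑ρ⁻¹) y := by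
  rw [Matrix.mul_apply]
  simp only [permMatrix, Matrix.of_apply]
  rw [Finset.sum_eq_single (x ∘ ⇑ρ⁻¹)]
  · have : x = (x ∘ ⇑ρ⁻¹) ∘ ⇑ρ := by ext i; simp
    simp [← this, Function.comp_assoc]
  · intro z _ hz
    have : x ≠ z ∘ ⇑ρ := by
      intro h
      apply hz
      ext i; simp [h]
    simp [this]
  · simp

lemma weight_conj (N t : ℕ) (ρ : Equiv.Perm (Fin N))
    (B : Matrix (Fin N → Fin 2) (Fin N → Fin 2) ℂ)
    (hB : WeightAtMost N t B) :
    WeightAtMost N t (permMatrix N ρ * B * permMatrix N ρ⁻¹) := by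
  obtain ⟨S, hS, m, hm⟩ := hB
  refine ⟨S.image ⇑ρ⁻¹, le_trans Finset.card_image_le hS, ?_⟩
  refine ⟨fun u v => m (fun i => u ⟨ρ⁻¹ i.val, Finset.mem_image_of_mem _ i.2⟩)
    (fun i => v ⟨ρ⁻¹ i.val, Finset.mem_image_of_mem _ i.2⟩), ?_⟩
  intro x y
  rw [mul_permMatrix_apply, permMatrix_mul_apply, hm]
  have hcond : (∀ i ∉ S, (x ∘ ⇑ρ⁻¹) i = (y ∘ ⇑ρ⁻¹) i) ↔
      (∀ j ∉ S.image ⇑ρ⁻¹, x j = y j) := by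
    constructor
    · intro h j hj
      have : ρ j ∉ S := by
        intro hin
        exact hj (by simpa using Finset.mem_image_of_mem ⇑ρ⁻¹ hin)
      simpa using h (ρ j) this
    · intro h i hi
      apply h
      intro hmem
      obtain ⟨a, ha, hae⟩ := Finset.mem_image.mp hmem
      have : a = i := ρ⁻¹.injective hae
      exact hi (this ▸ ha)
  by_cases h : ∀ j ∉ S.image ⇑ρ⁻¹, x j = y j
  · rw [if_pos (hcond.mpr h), if_pos h]
    rfl
  · rw [if_neg (fun hc => h (hcond.mp hc)), if_neg h]

theorem stmt_5 (N t : ℕ) (hN : 1 ≤ N)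
    (Pcode : Matrix (Fin N → Fin 2) (Fin N → Fin 2) ℂ)
    (habsorb : ∀ σ : Equiv.Perm (Fin N),
      Pcode * permMatrix N σ = Pcode ∧ permMatrix N σ * Pcode = Pcode)
    (hKL : ∀ A B : Matrix (Fin N → Fin 2) (Fin N → Fin 2) ℂ,
      WeightAtMost N t A → WeightAtMost N t B →
      ∃ c : ℂ, Pcode * Aᴴ * B * Pcode = c • Pcode) :
    ∀ A B : Matrix (Fin N → Fin 2) (Fin N → Fin 2) ℂ,
      WeightAtMost N t A → WeightAtMost N t B →
      ∀ σ τ : Equiv.Perm (Fin N),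
        ∃ g : ℂ, Pcode * Aᴴ * (permMatrix N σ)ᴴ * permMatrix N τ * B * Pcode = g • Pcode := by
  intro A B hA hB σ τ
  set ρ := σ⁻¹.trans τ with hρ
  obtain ⟨c, hc⟩ := hKL A (permMatrix N ρ * B * permMatrix N ρ⁻¹) hA (weight_conj N t ρ B hB)
  refine ⟨c, ?_⟩
  have key : Pcode * Aᴴ * (permMatrix N σ)ᴴ * permMatrix N τ * B * Pcode
      = Pcode * Aᴴ * (permMatrix N ρ * B * permMatrix N ρ⁻¹) * Pcode := by
    rw [permMatrix_conjTranspose]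
    have h1 : permMatrix N σ⁻¹ * permMatrix N τ = permMatrix N ρ := permMatrix_mul N σ⁻¹ τ
    have h2 : permMatrix N ρ⁻¹ * Pcode = Pcode := (habsorb ρ⁻¹).2
    calc Pcode * Aᴴ * permMatrix N σ⁻¹ * permMatrix N τ * B * Pcode
        = Pcode * Aᴴ * (permMatrix N σ⁻¹ * permMatrix N τ) * B * Pcode := by
          simp only [Matrix.mul_assoc]
      _ = Pcode * Aᴴ * permMatrix N ρ * B * (permMatrix N ρ⁻¹ * Pcode) := by rw [h1, h2]
      _ = Pcode * Aᴴ * (permMatrix N ρ * B * permMatrix N ρ⁻¹) * Pcode := by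
          simp only [Matrix.mul_assoc]
  rw [key, hc]
end

section
/- Let N, s, g be real numbers, n ≥ 0 a natural number, Δ ∈ ℝ, and j ∈ {0,1}. Then 2^{−n+1} · Σ_{0 ≤ k ≤ n, k ≡ j (mod 2)} C(n,k) · exp( i(g k + s − N/2)Δ ) = exp(−iΔ(N/2 − s)) · exp(i g n Δ/2) · ( cos^n(gΔ/2) + (−1)^j (−i)^n sin^n(gΔ/2) ). In particular, ⟨j_L| U_Δ |j_L⟩ = φ_{n,j}(Δ) for the logical codewords of a shifted gnu code. -/
open Finset

lemma parity_sum (n j : ℕ) (hj : j ≤ 1) (x : ℂ) :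
    ∑ k ∈ (Finset.range (n+1)).filter (fun k => k % 2 = j),
      (n.choose k : ℂ) * x^k
    = ((1+x)^n + (-1)^j * (1-x)^n)/2 := by
  have h1 : (1+x)^n = ∑ k ∈ Finset.range (n+1), (n.choose k : ℂ) * x^k := by
    rw [add_comm, add_pow]; apply Finset.sum_congr rfl; intro k _; simp; ring
  have h2 : (1-x)^n = ∑ k ∈ Finset.range (n+1), (n.choose k : ℂ) * ((-1)^k * x^k) := by
    have h : (1 - x) = -x + 1 := by ring
    rw [h, add_pow]
    apply Finset.sum_congr rfl; intro k _
    rw [neg_pow]; ring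
  rw [h1, h2, Finset.mul_sum, ← Finset.sum_add_distrib, Finset.sum_filter,
    Finset.sum_div]
  apply Finset.sum_congr rfl
  intro k _
  rcases Nat.even_or_odd k with hk | hk
  · have hk2 : k % 2 = 0 := Nat.even_iff.mp hk
    have hx : (-1:ℂ)^k = 1 := hk.neg_one_pow
    interval_cases j
    · simp [hk2, hx]
    · simp [hk2, hx]
  · have hk2 : k % 2 = 1 := Nat.odd_iff.mp hk
    have hx : (-1:ℂ)^k = -1 := hk.neg_one_pow
    interval_cases j
    · simp [hk2, hx]
    · simp [hk2, hx]

lemma half_plus (θ : ℝ) :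
    1 + Complex.exp ((θ:ℂ) * Complex.I)
      = 2 * Complex.cos (θ/2) * Complex.exp ((θ/2 : ℂ) * Complex.I) := by
  rw [Complex.exp_mul_I, Complex.exp_mul_I]
  have h1 : Complex.cos (θ:ℂ) = Complex.cos ((θ:ℂ)/2)^2 - Complex.sin ((θ:ℂ)/2)^2 := by
    have h := Complex.cos_two_mul' ((θ:ℂ)/2)
    rwa [show 2 * ((θ:ℂ)/2) = (θ:ℂ) by ring] at h
  have h2 : Complex.sin (θ:ℂ) = 2 * Complex.sin ((θ:ℂ)/2) * Complex.cos ((θ:ℂ)/2) := by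
    have h := Complex.sin_two_mul ((θ:ℂ)/2)
    rwa [show 2 * ((θ:ℂ)/2) = (θ:ℂ) by ring] at h
  have h3 : Complex.sin ((θ:ℂ)/2)^2 + Complex.cos ((θ:ℂ)/2)^2 = 1 :=
    Complex.sin_sq_add_cos_sq _
  rw [h1, h2]
  linear_combination -h3

lemma half_minus (θ : ℝ) :
    1 - Complex.exp ((θ:ℂ) * Complex.I)
      = -2 * Complex.I * Complex.sin (θ/2) * Complex.exp ((θ/2 : ℂ) * Complex.I) := by
  rw [Complex.exp_mul_I, Complex.exp_mul_I]
  have h1 : Complex.cos (θ:ℂ) = Complex.cos ((θ:ℂ)/2)^2 - Complex.sin ((θ:ℂ)/2)^2 := by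
    have h := Complex.cos_two_mul' ((θ:ℂ)/2)
    rwa [show 2 * ((θ:ℂ)/2) = (θ:ℂ) by ring] at h
  have h2 : Complex.sin (θ:ℂ) = 2 * Complex.sin ((θ:ℂ)/2) * Complex.cos ((θ:ℂ)/2) := by
    have h := Complex.sin_two_mul ((θ:ℂ)/2)
    rwa [show 2 * ((θ:ℂ)/2) = (θ:ℂ) by ring] at h
  have h3 : Complex.sin ((θ:ℂ)/2)^2 + Complex.cos ((θ:ℂ)/2)^2 = 1 :=
    Complex.sin_sq_add_cos_sq _
  have h4 : Complex.I^2 = -1 := Complex.I_sq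
  rw [h1, h2]
  linear_combination -h3 + 2 * Complex.sin ((θ:ℂ)/2)^2 * h4

theorem stmt_6 (N s g : ℝ) (n : ℕ) (Δ : ℝ) (j : ℕ) (hj : j ≤ 1) :
    (2:ℂ)^(-(n:ℤ)+1) * ∑ k ∈ (Finset.range (n+1)).filter (fun k => k % 2 = j),
      (n.choose k : ℂ) * Complex.exp (Complex.I * ((g * k + s - N/2 : ℝ) : ℂ) * (Δ : ℂ))
    = Complex.exp (-Complex.I * (Δ : ℂ) * ((N/2 - s : ℝ) : ℂ))
      * Complex.exp (Complex.I * (g : ℂ) * (n : ℂ) * (Δ : ℂ) / 2)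
      * ((Real.cos (g*Δ/2) : ℂ)^n + (-1)^j * (-Complex.I)^n * (Real.sin (g*Δ/2) : ℂ)^n) := by
  set A : ℂ := Complex.exp (Complex.I * ((s:ℂ) - (N:ℂ)/2) * (Δ:ℂ)) with hA
  set x : ℂ := Complex.exp (((g*Δ : ℝ):ℂ) * Complex.I) with hx
  have hterm : ∀ k : ℕ,
      Complex.exp (Complex.I * ((g * k + s - N/2 : ℝ) : ℂ) * (Δ : ℂ)) = A * x^k := by
    intro k
    rw [hA, hx, ← Complex.exp_nat_mul, ← Complex.exp_add]
    congr 1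
    push_cast
    ring
  have hsum : ∑ k ∈ (Finset.range (n+1)).filter (fun k => k % 2 = j),
      (n.choose k : ℂ) * Complex.exp (Complex.I * ((g * k + s - N/2 : ℝ) : ℂ) * (Δ : ℂ))
      = A * (((1+x)^n + (-1)^j * (1-x)^n)/2) := by
    rw [← parity_sum n j hj x, Finset.mul_sum]
    apply Finset.sum_congr rfl
    intro k _
    rw [hterm k]; ring
  rw [hsum, hx, half_plus (g*Δ), half_minus (g*Δ)]
  have hE : Complex.exp (Complex.I * (g : ℂ) * (n : ℂ) * (Δ : ℂ) / 2)
      = Complex.exp (((g*Δ/2 : ℝ):ℂ) * Complex.I)^n := by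
    rw [← Complex.exp_nat_mul]
    congr 1
    push_cast
    ring
  have hA' : Complex.exp (-Complex.I * (Δ : ℂ) * ((N/2 - s : ℝ) : ℂ)) = A := by
    rw [hA]; congr 1; push_cast; ring
  rw [hE, hA']
  have hcos : ((Real.cos (g*Δ/2) : ℝ):ℂ) = Complex.cos (((g*Δ : ℝ):ℂ)/2) := by
    rw [Complex.ofReal_cos]; norm_num
  have hsin : ((Real.sin (g*Δ/2) : ℝ):ℂ) = Complex.sin (((g*Δ : ℝ):ℂ)/2) := by
    rw [Complex.ofReal_sin]; norm_num
  rw [hcos, hsin]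
  have h2n : (2:ℂ)^(-(n:ℤ)+1) = 2 / 2^n := by
    rw [zpow_add₀ (two_ne_zero), zpow_neg, zpow_natCast, zpow_one]
    ring
  rw [h2n, mul_pow, mul_pow, mul_pow, mul_pow, mul_pow,
    show ((-2:ℂ))^n = (-1)^n * 2^n by rw [neg_pow]]
  have h2 : ((g*Δ : ℝ):ℂ)/2 = ((g*Δ/2 : ℝ):ℂ) := by push_cast; ring
  rw [h2]
  have hne : (2:ℂ)^n ≠ 0 := pow_ne_zero _ two_ne_zero
  field_simp
  ring
end

section
/- Let N, s, g be real numbers, let n ≥ 3 be an odd natural number, let Δ ∈ ℝ, j ∈ {0,1}, and set x = gΔ/2. Then | φ_{n,j}(Δ) − exp(igΔ) · φ_{n−1, 1−j}(Δ) |² = (1/4) · sin²(2x) · ( sin^{2n−4}(x) + cos^{2n−4}(x) ). Consequently, the transition probability |⟨q_j| U_Δ |j_L⟩|² of a shifted gnu code equals (n/4) sin²(2x) ( sin^{2n−4}x + cos^{2n−4}x ). -/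
open Finset

/-- `φ_{m,j}(Δ)` for an `s`-shifted gnu code on `N` qubits with gap `g`. -/
noncomputable def phiGnu (N s g : ℝ) (m j : ℕ) (Δ : ℝ) : ℂ :=
  Complex.exp (-Complex.I * (Δ : ℂ) * ((N/2 - s : ℝ) : ℂ))
    * Complex.exp (Complex.I * (g : ℂ) * (m : ℂ) * (Δ : ℂ) / 2)
    * ((Real.cos (g*Δ/2) : ℂ)^m + (-1)^j * (-Complex.I)^m * (Real.sin (g*Δ/2) : ℂ)^m)

lemma aux1 (x : ℝ) (k : ℕ) (hk : 1 ≤ k) (ε : ℂ) (hε : ε = 1 ∨ ε = -1) :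
    ‖((Real.cos x : ℂ))^(2*k+1) + ε * (-Complex.I)^(2*k+1) * ((Real.sin x : ℂ))^(2*k+1)
      - ((Real.cos x : ℂ) + (Real.sin x : ℂ) * Complex.I)
        * (((Real.cos x : ℂ))^(2*k) + (-ε) * (-Complex.I)^(2*k) * ((Real.sin x : ℂ))^(2*k))‖ ^ 2
    = (1/4) * Real.sin (2*x)^2 * (Real.sin x ^ (2*(2*k+1)-4) + Real.cos x ^ (2*(2*k+1)-4)) := by
  obtain ⟨m, rfl⟩ : ∃ m, k = m + 1 := ⟨k - 1, by omega⟩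
  have h2k : (-Complex.I)^(2*(m+1)) = (-1)^(m+1) := by
    rw [pow_mul]; norm_num
  have h2k1 : (-Complex.I )^(2*(m+1)+1) = (-1)^(m+1) * (-Complex.I) := by
    rw [pow_succ, h2k]
  have hexp : 2*(2*(m+1)+1)-4 = 4*m+2 := by omega
  rw [hexp, h2k, h2k1, Real.sin_two_mul]
  rcases hε with rfl | rfl <;> rcases neg_one_pow_eq_or ℂ (m+1) with h | h <;> rw [h] <;>
    rw [Complex.sq_norm, Complex.normSq_apply] <;>
    simp only [← Complex.ofReal_pow, Complex.sub_re, Complex.add_re, Complex.mul_re,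
      Complex.mul_im, Complex.sub_im, Complex.add_im, Complex.I_re, Complex.I_im,
      Complex.ofReal_re, Complex.ofReal_im, Complex.one_re, Complex.one_im,
      Complex.neg_re, Complex.neg_im, neg_neg, one_mul, mul_zero, zero_mul, mul_one,
      sub_zero, zero_sub, add_zero, zero_add] <;>
    ring

lemma keylem (N s g : ℝ) (k : ℕ) (hk : 1 ≤ k) (Δ : ℝ) (j : ℕ) (hj : j ≤ 1) :
    ‖phiGnu N s g (2*k+1) j Δ
        - Complex.exp (Complex.I * (g : ℂ) * (Δ : ℂ)) * phiGnu N s g (2*k) (1-j) Δ‖ ^ 2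
      = (1/4) * Real.sin (2*(g*Δ/2))^2
        * (Real.sin (g*Δ/2) ^ (2*(2*k+1)-4) + Real.cos (g*Δ/2) ^ (2*(2*k+1)-4)) := by
  set c : ℂ := (Real.cos (g*Δ/2) : ℂ) with hc
  set sn : ℂ := (Real.sin (g*Δ/2) : ℂ) with hsn
  set E1 : ℂ := Complex.exp (-Complex.I * (Δ : ℂ) * ((N/2 - s : ℝ) : ℂ)) with hE1
  have hexp : Complex.exp (Complex.I * (g:ℂ) * (Δ:ℂ))
        * Complex.exp (Complex.I * (g:ℂ) * ((2*k : ℕ):ℂ) * (Δ:ℂ) / 2)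
      = Complex.exp (Complex.I * (g:ℂ) * ((2*k+1 : ℕ):ℂ) * (Δ:ℂ) / 2) * (c + sn * Complex.I) := by
    rw [hc, hsn, Complex.ofReal_cos, Complex.ofReal_sin, ← Complex.exp_mul_I,
      ← Complex.exp_add, ← Complex.exp_add]
    congr 1
    push_cast
    ring
  obtain ⟨ε, hεv, h1, h2⟩ : ∃ ε : ℂ, (ε = 1 ∨ ε = -1) ∧ (-1:ℂ)^j = ε ∧ (-1:ℂ)^(1-j) = -ε := by
    interval_cases j
    · exact ⟨1, by norm_num, by norm_num, by norm_num⟩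
    · exact ⟨-1, by norm_num, by norm_num, by norm_num⟩
  have habs1 : ‖E1‖ = 1 := by
    rw [hE1, Complex.norm_exp]
    simp [Complex.mul_re]
  have habs2 : ‖Complex.exp (Complex.I * (g:ℂ) * ((2*k+1 : ℕ):ℂ) * (Δ:ℂ) / 2)‖ = 1 := by
    rw [Complex.norm_exp]
    have : (Complex.I * (g:ℂ) * ((2*k+1 : ℕ):ℂ) * (Δ:ℂ) / 2) = Complex.I * ((g * (2*k+1) * Δ / 2 : ℝ) : ℂ) := by
      push_cast; ring
    rw [this]
    simp [Complex.mul_re]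
  have hD : phiGnu N s g (2*k+1) j Δ
        - Complex.exp (Complex.I * (g : ℂ) * (Δ : ℂ)) * phiGnu N s g (2*k) (1-j) Δ
      = E1 * Complex.exp (Complex.I * (g:ℂ) * ((2*k+1 : ℕ):ℂ) * (Δ:ℂ) / 2)
        * (c^(2*k+1) + ε * (-Complex.I)^(2*k+1) * sn^(2*k+1)
          - (c + sn * Complex.I)
            * (c^(2*k) + (-ε) * (-Complex.I)^(2*k) * sn^(2*k))) := by
    simp only [phiGnu, ← hc, ← hsn, ← hE1, h1, h2]
    linear_combination (-(E1 * (c^(2*k) + (-ε) * (-Complex.I)^(2*k) * sn^(2*k)))) * hexp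
  rw [hD, norm_mul, norm_mul, habs1, habs2, one_mul, one_mul]
  exact aux1 (g*Δ/2) k hk ε hεv


theorem stmt_7 (N s g : ℝ) (n : ℕ) (hn : 3 ≤ n) (hodd : Odd n) (Δ : ℝ)
    (j : ℕ) (hj : j ≤ 1) (x : ℝ) (hx : x = g*Δ/2) :
    ‖phiGnu N s g n j Δ
        - Complex.exp (Complex.I * (g : ℂ) * (Δ : ℂ)) * phiGnu N s g (n-1) (1-j) Δ‖ ^ 2
      = (1/4) * Real.sin (2*x)^2 * (Real.sin x ^ (2*n-4) + Real.cos x ^ (2*n-4)) ∧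
    (n : ℝ) * ‖phiGnu N s g n j Δ
        - Complex.exp (Complex.I * (g : ℂ) * (Δ : ℂ)) * phiGnu N s g (n-1) (1-j) Δ‖ ^ 2
      = (n : ℝ)/4 * Real.sin (2*x)^2 * (Real.sin x ^ (2*n-4) + Real.cos x ^ (2*n-4)) := by
  obtain ⟨k, hk⟩ := hodd
  have hk1 : 1 ≤ k := by omega
  subst hx hk
  have h1 : 2*k+1-1 = 2*k := by omega
  rw [h1]
  have h := keylem N s g k hk1 Δ j hj
  exact ⟨h, by rw [h]; ring⟩
end

section
/- Let n ≥ 3 be an odd natural number, let N, s, g, Δ be real numbers, j ∈ {0,1}, and set x = gΔ/2. Then: (i) |φ_{n,j}(Δ)|² = cos^{2n}(x) + sin^{2n}(x); and (ii) cos^{2n}(x) + sin^{2n}(x) + n·( sin^{2n−2}(x) cos²(x) + cos^{2n−2}(x) sin²(x) ) = 1 − Σ_{k=2}^{n−2} C(n,k) cos^{2k}(x) sin^{2n−2k}(x). Consequently, for a normalized input a|0_L⟩ + b|1_L⟩ evolved by U_Δ, the probabilities of projecting onto the codespace and onto the first-order error space are cos^{2n}x + sin^{2n}x and (n/4)sin²(2x)(sin^{2n−4}x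 + cos^{2n−4}x) respectively, and the failure probability is p_flag = Σ_{k=2}^{n−2} C(n,k) cos^{2k}x sin^{2n−2k}x. -/
open Finset

theorem stmt_8 (n : ℕ) (hn : 3 ≤ n) (hodd : Odd n) (N s g Δ : ℝ)
    (j : ℕ) (hj : j ≤ 1) (x : ℝ) (hx : x = g*Δ/2) :
    ‖phiGnu N s g n j Δ‖ ^ 2 = Real.cos x ^ (2*n) + Real.sin x ^ (2*n) ∧
    Real.cos x ^ (2*n) + Real.sin x ^ (2*n)
        + (n : ℝ) * (Real.sin x ^ (2*n-2) * Real.cos x ^ 2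
            + Real.cos x ^ (2*n-2) * Real.sin x ^ 2)
      = 1 - ∑ k ∈ Finset.Icc 2 (n-2),
          (n.choose k : ℝ) * Real.cos x ^ (2*k) * Real.sin x ^ (2*n-2*k) := by
  obtain ⟨m, hm⟩ := hodd
  constructor
  · -- part (i)
    subst hx
    unfold phiGnu
    rw [norm_mul, norm_mul, Complex.norm_exp, Complex.norm_exp]
    have h1 : (-Complex.I * (Δ:ℂ) * ((N/2 - s : ℝ):ℂ)).re = 0 := by simp
    have h2 : (Complex.I * (g:ℂ) * (n:ℂ) * (Δ:ℂ) / 2).re = 0 := by simp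
    rw [h1, h2, Real.exp_zero, one_mul, one_mul]
    set c := Real.cos (g*Δ/2) with hc
    set sn := Real.sin (g*Δ/2) with hsn
    have hni : (-Complex.I)^n = (-1)^m * (-Complex.I) := by
      rw [hm, pow_succ, pow_mul]
      norm_num [Complex.I_sq]
    have hz : (c:ℂ)^n + (-1)^j * (-Complex.I)^n * (sn:ℂ)^n
        = ((c^n : ℝ) : ℂ) + (((-1)^(j+m+1) * sn^n : ℝ):ℂ) * Complex.I := by
      rw [hni]; push_cast; ring
    rw [hz, Complex.sq_norm, Complex.normSq_add_mul_I]
    have hsq : ((-1:ℝ)^(j+m+1))^2 = 1 := by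
      rw [← pow_mul, mul_comm, pow_mul]; norm_num
    rw [mul_pow, hsq, one_mul, ← pow_mul, ← pow_mul, Nat.mul_comm]
  · -- part (ii)
    set a := Real.cos x ^ 2 with ha
    set b := Real.sin x ^ 2 with hb
    have hab : a + b = 1 := by
      rw [ha, hb, add_comm]; exact Real.sin_sq_add_cos_sq x
    have h1 : ∑ k ∈ range (n+1), a^k * b^(n-k) * (n.choose k : ℝ) = 1 := by
      rw [← add_pow, hab, one_pow]
    have hset : range (n+1) = insert 0 (insert 1 (insert (n-1) (insert n (Icc 2 (n-2))))) := by
      ext k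
      simp only [mem_range, mem_insert, mem_Icc, Nat.lt_succ_iff]
      omega
    rw [hset, Finset.sum_insert (by simp; omega), Finset.sum_insert (by simp; omega),
      Finset.sum_insert (by simp; omega), Finset.sum_insert (by simp; omega)] at h1
    rw [pow_zero, one_mul, Nat.sub_zero, Nat.choose_zero_right, Nat.cast_one, mul_one,
      pow_one, Nat.choose_one_right, Nat.choose_self, Nat.cast_one, Nat.sub_self,
      pow_zero, mul_one, mul_one,
      show n - (n-1) = 1 by omega, pow_one,
      show n.choose (n-1) = n by
        rw [Nat.choose_symm (show 1 ≤ n by omega), Nat.choose_one_right]] at h1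
    have hgoal : ∑ k ∈ Icc 2 (n-2), (n.choose k : ℝ) * Real.cos x ^ (2*k) * Real.sin x ^ (2*n-2*k)
        = ∑ k ∈ Icc 2 (n-2), a^k * b^(n-k) * (n.choose k : ℝ) := by
      refine Finset.sum_congr rfl fun k _ => ?_
      rw [show 2*n - 2*k = 2*(n-k) by omega, pow_mul, pow_mul, ha, hb]; ring
    rw [show (2*n - 2 : ℕ) = 2*(n-1) by omega, hgoal,
      pow_mul, pow_mul, pow_mul, pow_mul, ← ha, ← hb]
    linear_combination h1
end

section
/- Let n ≥ 3 be an odd natural number and let x ∈ ℝ with cos(x) ≠ 0. Then: (i) ( cos^n(x) + i^n sin^n(x) ) / ( cos^n(x) − i^n sin^n(x) ) = exp( i ζ₀ ) where ζ₀ = 2·arctan( i^{n−1} tan^n(x) ); and (ii) ( cos^{n−2}(x) − i^n sin^{n−2}(x) ) / ( cos^{n−2}(x) + i^n sin^{n−2}(x) ) = exp( i ζ₁ ) where ζ₁ = 2·arctan( − i^{n−1} tan^{n−2}(x) ). Here i^{n−1} = (−1)^{(n−1)/2} is real since n is odd, so ζ₀ and ζ₁ are real numbers, and the denominators are nonzero.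 -/
open Finset

lemma aux_ne (t : ℝ) : (1 : ℂ) - Complex.I * t ≠ 0 := by
  intro h
  have := congrArg Complex.re h
  simp [Complex.ext_iff] at this

lemma aux_exp (t : ℝ) :
    Complex.exp (Complex.I * ((2 * Real.arctan t : ℝ) : ℂ))
      = (1 + Complex.I * t) / (1 - Complex.I * t) := by
  have hkey : Complex.I * ((2 * Real.arctan t : ℝ) : ℂ)
      = ((Real.arctan t : ℝ) : ℂ) * Complex.I + ((Real.arctan t : ℝ) : ℂ) * Complex.I := by
    push_cast; ring
  rw [hkey, Complex.exp_add, Complex.exp_mul_I,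
    ← Complex.ofReal_cos, ← Complex.ofReal_sin, Real.cos_arctan, Real.sin_arctan]
  have hs : Real.sqrt (1 + t^2) ≠ 0 := by positivity
  have hs2 : (Real.sqrt (1 + t^2) : ℝ)^2 = 1 + t^2 := Real.sq_sqrt (by positivity)
  have hsC : ((Real.sqrt (1 + t^2) : ℝ) : ℂ) ≠ 0 := by exact_mod_cast hs
  have h1t : ((1 : ℝ) + t^2 : ℂ) ≠ 0 := by
    have : (0:ℝ) < 1 + t^2 := by positivity
    exact_mod_cast this.ne'
  have hden := aux_ne t
  have hsC2 : ((Real.sqrt (1 + t^2) : ℝ) : ℂ)^2 = 1 + (t:ℂ)^2 := by exact_mod_cast hs2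
  push_cast
  field_simp
  ring_nf
  rw [hsC2]
  have h3 : Complex.I^3 = -Complex.I := by
    rw [show (3:ℕ) = 2 + 1 from rfl, pow_succ, Complex.I_sq]; ring
  have hden' : 1 - (t:ℂ) * Complex.I ≠ 0 := by rw [mul_comm]; exact hden
  field_simp
  linear_combination ((1 - (t:ℂ) * Complex.I) * (t:ℂ)^2 - 2 * (t:ℂ)^2) * Complex.I_sq

lemma ratio_eq (c : ℂ) (hc : c ≠ 0) (t : ℝ) :
    c * (1 - Complex.I * t) ≠ 0 ∧
    (c * (1 + Complex.I * t)) / (c * (1 - Complex.I * t))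
      = Complex.exp (Complex.I * ((2 * Real.arctan t : ℝ) : ℂ)) := by
  refine ⟨mul_ne_zero hc (aux_ne t), ?_⟩
  rw [mul_div_mul_left _ _ hc, aux_exp]

theorem stmt_9 (n : ℕ) (hn : 3 ≤ n) (hodd : Odd n) (x : ℝ) (hx : Real.cos x ≠ 0) :
    ((Real.cos x : ℂ)^n - Complex.I^n * (Real.sin x : ℂ)^n ≠ 0 ∧
     ((Real.cos x : ℂ)^n + Complex.I^n * (Real.sin x : ℂ)^n) /
        ((Real.cos x : ℂ)^n - Complex.I^n * (Real.sin x : ℂ)^n)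
      = Complex.exp (Complex.I *
          ((2 * Real.arctan ((-1:ℝ)^((n-1)/2) * Real.tan x ^ n) : ℝ) : ℂ))) ∧
    ((Real.cos x : ℂ)^(n-2) + Complex.I^n * (Real.sin x : ℂ)^(n-2) ≠ 0 ∧
     ((Real.cos x : ℂ)^(n-2) - Complex.I^n * (Real.sin x : ℂ)^(n-2)) /
        ((Real.cos x : ℂ)^(n-2) + Complex.I^n * (Real.sin x : ℂ)^(n-2))
      = Complex.exp (Complex.I *
          ((2 * Real.arctan (-((-1:ℝ)^((n-1)/2) * Real.tan x ^ (n-2))) : ℝ) : ℂ))) := by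
  obtain ⟨k, hk⟩ := hodd
  have hk2 : (n-1)/2 = k := by omega
  have hc : (Real.cos x : ℂ) ≠ 0 := Complex.ofReal_ne_zero.mpr hx
  have hI : Complex.I ^ n = (((-1:ℝ)^((n-1)/2) : ℝ) : ℂ) * Complex.I := by
    rw [hk2, hk, pow_succ, pow_mul, Complex.I_sq]; push_cast; ring
  have htan : (Real.tan x : ℂ) * (Real.cos x : ℂ) = (Real.sin x : ℂ) := by
    rw [Real.tan_eq_sin_div_cos, Complex.ofReal_div]
    exact div_mul_cancel₀ _ hc
  have hpow : ∀ m : ℕ, (Real.tan x : ℂ)^m * (Real.cos x : ℂ)^m = (Real.sin x : ℂ)^m :=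
    fun m => by rw [← mul_pow, htan]
  constructor
  · have e1 : (Real.cos x : ℂ)^n + Complex.I^n * (Real.sin x : ℂ)^n
        = (Real.cos x : ℂ)^n *
          (1 + Complex.I * ((((-1:ℝ)^((n-1)/2) * Real.tan x ^ n : ℝ)) : ℂ)) := by
      rw [hI, ← hpow n]; push_cast; ring
    have e2 : (Real.cos x : ℂ)^n - Complex.I^n * (Real.sin x : ℂ)^n
        = (Real.cos x : ℂ)^n *
          (1 - Complex.I * ((((-1:ℝ)^((n-1)/2) * Real.tan x ^ n : ℝ)) : ℂ)) := by
      rw [hI, ← hpow n]; push_cast; ring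
    rw [e1, e2]
    exact ratio_eq _ (pow_ne_zero n hc) _
  · have e3 : (Real.cos x : ℂ)^(n-2) + Complex.I^n * (Real.sin x : ℂ)^(n-2)
        = (Real.cos x : ℂ)^(n-2) *
          (1 - Complex.I * (((-((-1:ℝ)^((n-1)/2) * Real.tan x ^ (n-2)) : ℝ)) : ℂ)) := by
      rw [hI, ← hpow (n-2)]; push_cast; ring
    have e4 : (Real.cos x : ℂ)^(n-2) - Complex.I^n * (Real.sin x : ℂ)^(n-2)
        = (Real.cos x : ℂ)^(n-2) *
          (1 + Complex.I * (((-((-1:ℝ)^((n-1)/2) * Real.tan x ^ (n-2)) : ℝ)) : ℂ)) := by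
      rw [hI, ← hpow (n-2)]; push_cast; ring
    rw [e3, e4]
    exact ratio_eq _ (pow_ne_zero _ hc) _
end

section
/- Let N, s, g be real numbers, n ≥ 1 a natural number, and j ∈ {0,1}. Then for every Δ ∈ ℝ: (i) i · (d/dΔ) φ_{n,j}(Δ) − (N/2 − s − gn/2) · φ_{n,j}(Δ) = (gn/2) · ( φ_{n,j}(Δ) − exp(igΔ) · φ_{n−1, 1−j}(Δ) ); and (ii) if in addition n is odd, then with x = gΔ/2, φ_{n,j}(Δ) − exp(igΔ) · φ_{n−1, 1−j}(Δ) = exp(−iΔ(N/2 − s)) · exp(i n x) · ( −i cos^{n−1}(x) sin(x) + i^{n−1} (−1)^j sin^{n−1}(x) cos(x) ). -/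
open Finset

lemma zc (g Δ : ℝ) :
    Complex.exp (Complex.I * g * Δ / 2) * (Real.cos (g*Δ/2) : ℂ)
      = (1 + Complex.exp (Complex.I * g * Δ)) / 2 := by
  have h1 : ((g*Δ/2 : ℝ) : ℂ) * Complex.I = Complex.I * g * Δ / 2 := by push_cast; ring
  have h2 : -(((g*Δ/2 : ℝ) : ℂ)) * Complex.I = -(Complex.I * g * Δ / 2) := by push_cast; ring
  have hz : Complex.exp (Complex.I * g * Δ) = Complex.exp (Complex.I * g * Δ / 2) ^ 2 := by
    rw [← Complex.exp_nat_mul]; ring_nf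
  rw [Complex.ofReal_cos, Complex.cos, h1, h2, hz, Complex.exp_neg]
  have hne := Complex.exp_ne_zero (Complex.I * g * Δ / 2)
  field_simp
  ring

lemma zs (g Δ : ℝ) :
    Complex.exp (Complex.I * g * Δ / 2) * (-Complex.I) * (Real.sin (g*Δ/2) : ℂ)
      = (1 - Complex.exp (Complex.I * g * Δ)) / 2 := by
  have h1 : ((g*Δ/2 : ℝ) : ℂ) * Complex.I = Complex.I * g * Δ / 2 := by push_cast; ring
  have h2 : -(((g*Δ/2 : ℝ) : ℂ)) * Complex.I = -(Complex.I * g * Δ / 2) := by push_cast; ring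
  have hz : Complex.exp (Complex.I * g * Δ) = Complex.exp (Complex.I * g * Δ / 2) ^ 2 := by
    rw [← Complex.exp_nat_mul]; ring_nf
  rw [Complex.ofReal_sin, Complex.sin, h1, h2, hz, Complex.exp_neg]
  have hne := Complex.exp_ne_zero (Complex.I * g * Δ / 2)
  field_simp
  linear_combination (Complex.exp (Complex.I * ↑g * ↑Δ / 2) ^ 2 - 1) * Complex.I_sq

lemma phi_eq (N s g : ℝ) (m j : ℕ) (Δ : ℝ) :
    phiGnu N s g m j Δ = Complex.exp (-Complex.I * (Δ : ℂ) * ((N/2 - s : ℝ) : ℂ)) *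
      (((1 + Complex.exp (Complex.I*g*Δ))/2)^m + (-1)^j * ((1 - Complex.exp (Complex.I*g*Δ))/2)^m) := by
  unfold phiGnu
  have hm : Complex.exp (Complex.I*(g:ℂ)*(m:ℂ)*Δ/2) = Complex.exp (Complex.I*g*Δ/2) ^ m := by
    rw [← Complex.exp_nat_mul]; ring_nf
  rw [hm, ← zc g Δ, ← zs g Δ, mul_pow, mul_pow, mul_pow]
  ring

theorem stmt_10 (N s g : ℝ) (n : ℕ) (hn : 1 ≤ n) (j : ℕ) (hj : j ≤ 1) :
    (∀ Δ : ℝ,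
      Complex.I * deriv (fun Δ' : ℝ => phiGnu N s g n j Δ') Δ
          - ((N/2 - s - g*n/2 : ℝ) : ℂ) * phiGnu N s g n j Δ
        = ((g*n/2 : ℝ) : ℂ) * (phiGnu N s g n j Δ
            - Complex.exp (Complex.I * (g : ℂ) * (Δ : ℂ)) * phiGnu N s g (n-1) (1-j) Δ)) ∧
    (Odd n → ∀ Δ : ℝ,
      phiGnu N s g n j Δ
          - Complex.exp (Complex.I * (g : ℂ) * (Δ : ℂ)) * phiGnu N s g (n-1) (1-j) Δ
        = Complex.exp (-Complex.I * (Δ : ℂ) * ((N/2 - s : ℝ) : ℂ))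
            * Complex.exp (Complex.I * (n : ℂ) * ((g*Δ/2 : ℝ) : ℂ))
            * (-Complex.I * (Real.cos (g*Δ/2) : ℂ)^(n-1) * (Real.sin (g*Δ/2) : ℂ)
               + Complex.I^(n-1) * (-1)^j * (Real.sin (g*Δ/2) : ℂ)^(n-1)
                 * (Real.cos (g*Δ/2) : ℂ))) := by
  obtain ⟨k, rfl⟩ : ∃ k, n = k + 1 := ⟨n - 1, (Nat.succ_pred_eq_of_pos hn).symm⟩
  constructor
  · intro Δ
    have hfun : (fun Δ' : ℝ => phiGnu N s g (k+1) j Δ') = fun Δ' : ℝ =>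
        Complex.exp (-Complex.I * (Δ' : ℂ) * ((N/2 - s : ℝ) : ℂ)) *
          (((1 + Complex.exp (Complex.I*g*Δ'))/2)^(k+1)
            + (-1)^j * ((1 - Complex.exp (Complex.I*g*Δ'))/2)^(k+1)) :=
      funext fun Δ' => phi_eq N s g (k+1) j Δ'
    rw [hfun, phi_eq, phi_eq]
    have h1 : HasDerivAt (fun t : ℂ => Complex.exp (-Complex.I * t * ((N/2 - s : ℝ) : ℂ)))
        (Complex.exp (-Complex.I * (Δ:ℂ) * ((N/2 - s : ℝ) : ℂ)) * (-Complex.I * ((N/2 - s : ℝ) : ℂ))) (Δ:ℂ) := by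
      simpa using (((hasDerivAt_id (Δ:ℂ)).const_mul (-Complex.I)).mul_const ((N/2 - s : ℝ) : ℂ)).cexp
    have h2 : HasDerivAt (fun t : ℂ => Complex.exp (Complex.I * (g:ℂ) * t))
        (Complex.exp (Complex.I * (g:ℂ) * (Δ:ℂ)) * (Complex.I * (g:ℂ))) (Δ:ℂ) := by
      simpa using ((hasDerivAt_id (Δ:ℂ)).const_mul (Complex.I * (g:ℂ))).cexp
    have ha : HasDerivAt (fun t : ℂ => (1 + Complex.exp (Complex.I * (g:ℂ) * t))/2)
        (Complex.exp (Complex.I * (g:ℂ) * (Δ:ℂ)) * (Complex.I * (g:ℂ)) / 2) (Δ:ℂ) :=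
      (h2.const_add 1).div_const 2
    have hb : HasDerivAt (fun t : ℂ => (1 - Complex.exp (Complex.I * (g:ℂ) * t))/2)
        (-(Complex.exp (Complex.I * (g:ℂ) * (Δ:ℂ)) * (Complex.I * (g:ℂ))) / 2) (Δ:ℂ) :=
      (h2.const_sub 1).div_const 2
    have hP : HasDerivAt (fun t : ℂ =>
        ((1 + Complex.exp (Complex.I*g*t))/2)^(k+1)
          + (-1:ℂ)^j * ((1 - Complex.exp (Complex.I*g*t))/2)^(k+1))
        (((k+1 : ℕ) : ℂ) * ((1 + Complex.exp (Complex.I*(g:ℂ)*(Δ:ℂ)))/2)^k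
            * (Complex.exp (Complex.I * (g:ℂ) * (Δ:ℂ)) * (Complex.I * (g:ℂ)) / 2)
          + (-1:ℂ)^j * (((k+1 : ℕ) : ℂ) * ((1 - Complex.exp (Complex.I*(g:ℂ)*(Δ:ℂ)))/2)^k
            * (-(Complex.exp (Complex.I * (g:ℂ) * (Δ:ℂ)) * (Complex.I * (g:ℂ))) / 2))) (Δ:ℂ) := by
      have h := (ha.pow (k+1)).add ((hb.pow (k+1)).const_mul ((-1:ℂ)^j))
      simp only [Nat.add_sub_cancel] at h
      exact h
    have hF := (h1.mul hP).comp_ofReal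
    simp only [Pi.mul_apply] at hF
    rw [hF.deriv]
    push_cast
    interval_cases j
    · simp only [pow_zero, pow_one, one_mul, mul_one, Nat.sub_zero, Nat.sub_self]
      linear_combination
        (-(((N:ℂ)/2 - (s:ℂ))) * Complex.exp (-Complex.I * (Δ:ℂ) * ((N:ℂ)/2 - (s:ℂ))) *
            (((1 + Complex.exp (Complex.I*(g:ℂ)*(Δ:ℂ)))/2)^(k+1)
              + ((1 - Complex.exp (Complex.I*(g:ℂ)*(Δ:ℂ)))/2)^(k+1))
          + ((g:ℂ)*((k:ℂ)+1)/2) * Complex.exp (-Complex.I * (Δ:ℂ) * ((N:ℂ)/2 - (s:ℂ)))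
              * Complex.exp (Complex.I*(g:ℂ)*(Δ:ℂ))
              * (((1 + Complex.exp (Complex.I*(g:ℂ)*(Δ:ℂ)))/2)^k
                 - ((1 - Complex.exp (Complex.I*(g:ℂ)*(Δ:ℂ)))/2)^k)) * Complex.I_sq
    · simp only [pow_zero, pow_one, one_mul, mul_one, Nat.sub_zero, Nat.sub_self]
      linear_combination
        (-(((N:ℂ)/2 - (s:ℂ))) * Complex.exp (-Complex.I * (Δ:ℂ) * ((N:ℂ)/2 - (s:ℂ))) *
            (((1 + Complex.exp (Complex.I*(g:ℂ)*(Δ:ℂ)))/2)^(k+1)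
              - ((1 - Complex.exp (Complex.I*(g:ℂ)*(Δ:ℂ)))/2)^(k+1))
          + ((g:ℂ)*((k:ℂ)+1)/2) * Complex.exp (-Complex.I * (Δ:ℂ) * ((N:ℂ)/2 - (s:ℂ)))
              * Complex.exp (Complex.I*(g:ℂ)*(Δ:ℂ))
              * (((1 + Complex.exp (Complex.I*(g:ℂ)*(Δ:ℂ)))/2)^k
                 + ((1 - Complex.exp (Complex.I*(g:ℂ)*(Δ:ℂ)))/2)^k)) * Complex.I_sq
  · intro hodd Δ
    have hk : Even k := by
      rcases hodd with ⟨l, hl⟩; exact ⟨l, by omega⟩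
    rw [phi_eq, phi_eq]
    simp only [Nat.add_sub_cancel]
    have hexp : Complex.exp (Complex.I * ((k+1 : ℕ) : ℂ) * ((g*Δ/2 : ℝ) : ℂ))
        = Complex.exp (Complex.I * g * Δ / 2) ^ (k+1) := by
      rw [← Complex.exp_nat_mul]; congr 1; push_cast; ring
    rw [hexp]
    have hA := zc g Δ
    have hB := zs g Δ
    have hAk : (Complex.exp (Complex.I*(g:ℂ)*(Δ:ℂ)/2) * (Real.cos (g*Δ/2):ℂ))^k
        = ((1 + Complex.exp (Complex.I*(g:ℂ)*(Δ:ℂ)))/2)^k := by rw [hA]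
    have hBk : (Complex.I * Complex.exp (Complex.I*(g:ℂ)*(Δ:ℂ)/2) * (Real.sin (g*Δ/2):ℂ))^k
        = ((1 - Complex.exp (Complex.I*(g:ℂ)*(Δ:ℂ)))/2)^k := by
      have h : Complex.I * Complex.exp (Complex.I*(g:ℂ)*(Δ:ℂ)/2) * (Real.sin (g*Δ/2):ℂ)
          = -((1 - Complex.exp (Complex.I*(g:ℂ)*(Δ:ℂ)))/2) := by linear_combination -hB
      rw [h, hk.neg_pow]
    interval_cases j
    · simp only [Nat.sub_zero, pow_one, pow_zero, one_mul, mul_one]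
      linear_combination
        (-(Complex.exp (-Complex.I * (Δ:ℂ) * ((N/2 - s : ℝ):ℂ))
            * (Complex.exp (Complex.I*(g:ℂ)*(Δ:ℂ)/2) * (-Complex.I) * (Real.sin (g*Δ/2):ℂ)))) * hAk
        + (-(Complex.exp (-Complex.I * (Δ:ℂ) * ((N/2 - s : ℝ):ℂ))
            * (Complex.exp (Complex.I*(g:ℂ)*(Δ:ℂ)/2) * (Real.cos (g*Δ/2):ℂ)))) * hBk
        + (-(Complex.exp (-Complex.I * (Δ:ℂ) * ((N/2 - s : ℝ):ℂ))
            * ((1 - Complex.exp (Complex.I*(g:ℂ)*(Δ:ℂ)))/2)^k)) * hA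
        + (-(Complex.exp (-Complex.I * (Δ:ℂ) * ((N/2 - s : ℝ):ℂ))
            * ((1 + Complex.exp (Complex.I*(g:ℂ)*(Δ:ℂ)))/2)^k)) * hB
    · simp only [Nat.sub_self, pow_one, pow_zero, one_mul, mul_one]
      linear_combination
        (-(Complex.exp (-Complex.I * (Δ:ℂ) * ((N/2 - s : ℝ):ℂ))
            * (Complex.exp (Complex.I*(g:ℂ)*(Δ:ℂ)/2) * (-Complex.I) * (Real.sin (g*Δ/2):ℂ)))) * hAk
        + (Complex.exp (-Complex.I * (Δ:ℂ) * ((N/2 - s : ℝ):ℂ))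
            * (Complex.exp (Complex.I*(g:ℂ)*(Δ:ℂ)/2) * (Real.cos (g*Δ/2):ℂ))) * hBk
        + (Complex.exp (-Complex.I * (Δ:ℂ) * ((N/2 - s : ℝ):ℂ))
            * ((1 - Complex.exp (Complex.I*(g:ℂ)*(Δ:ℂ)))/2)^k) * hA
        + (-(Complex.exp (-Complex.I * (Δ:ℂ) * ((N/2 - s : ℝ):ℂ))
            * ((1 + Complex.exp (Complex.I*(g:ℂ)*(Δ:ℂ)))/2)^k)) * hB
end

section
/- Let N, g, s be real numbers and n a natural number. If n ≥ 2, then for each j ∈ {0,1}: 2^{−n+1} · Σ_{0 ≤ k ≤ n, k ≡ j (mod 2)} C(n,k) · (N/2 − (gk + s)) = N/2 − s − gn/2. If n ≥ 3, then for each j ∈ {0,1}: 2^{−n+1} · Σ_{0 ≤ k ≤ n, k ≡ j (mod 2)} C(n,k) · (N/2 − (gk + s))² = (N/2 − s)² + (2s − N)·gn/2 + g²n(n+1)/4. In particular both logical codewords of a shifted gnu code have the same mean ⟨j_L|Ĵ^z|j_L⟩ = N/2 − s − gn/2 and the same second moment ⟨j_L|(Ĵ^z)²|j_L⟩. -/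
open Finset

private lemma key_shift (n : ℕ) (f : ℕ → ℝ) :
    ∑ k ∈ range (n+2), (k:ℝ) * f k * ((n+1).choose k : ℝ)
      = (n+1 : ℝ) * ∑ k ∈ range (n+1), f (k+1) * (n.choose k : ℝ) := by
  rw [Finset.sum_range_succ']
  simp only [Nat.cast_zero, zero_mul, add_zero, Finset.mul_sum]
  refine Finset.sum_congr rfl fun k _ => ?_
  have h : ((k+1) * (n+1).choose (k+1) : ℕ) = (n+1) * n.choose k := by
    simpa [Nat.succ_eq_add_one, mul_comm] using (Nat.add_one_mul_choose_eq n k).symm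
  have h' : ((k:ℝ)+1) * ((n+1).choose (k+1) : ℝ) = ((n:ℝ)+1) * (n.choose k : ℝ) := by
    exact_mod_cast congrArg (Nat.cast : ℕ → ℝ) h
  push_cast
  linear_combination f (k+1) * h'

private lemma sumC (q : ℕ) : ∑ k ∈ range (q+1), (q.choose k : ℝ) = 2^q := by
  exact_mod_cast congrArg (Nat.cast : ℕ → ℝ) (Nat.sum_range_choose q)

private lemma sumKC (p : ℕ) :
    ∑ k ∈ range (p+2), (k:ℝ) * ((p+1).choose k : ℝ) = (p+1) * 2^p := by
  have h := key_shift p (fun _ => (1:ℝ))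
  simp only [mul_one, one_mul] at h
  rw [h, sumC p]

private lemma sumKKC (p : ℕ) :
    ∑ k ∈ range (p+3), (k:ℝ)^2 * ((p+2).choose k : ℝ) = (p+2)*(p+3)*2^p := by
  have h := key_shift (p+1) (fun k => (k:ℝ))
  have h2 : ∑ k ∈ range (p+2), ((k:ℝ)+1) * ((p+1).choose k : ℝ)
      = (p+1) * 2^p + 2^(p+1) := by
    have : ∑ k ∈ range (p+2), ((k:ℝ)+1) * ((p+1).choose k : ℝ)
        = (∑ k ∈ range (p+2), (k:ℝ) * ((p+1).choose k : ℝ))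
          + ∑ k ∈ range (p+2), ((p+1).choose k : ℝ) := by
      rw [← Finset.sum_add_distrib]
      exact Finset.sum_congr rfl fun k _ => by ring
    rw [this, sumKC p, sumC (p+1)]
  push_cast at h
  calc ∑ k ∈ range (p+3), (k:ℝ)^2 * ((p+2).choose k : ℝ)
      = ∑ k ∈ range (p+3), (k:ℝ) * (k:ℝ) * ((p+2).choose k : ℝ) :=
        Finset.sum_congr rfl fun k _ => by ring
    _ = ((p:ℝ)+1+1) * ∑ k ∈ range (p+2), ((k:ℝ)+1) * ((p+1).choose k : ℝ) := h
    _ = (p+2)*(p+3)*2^p := by rw [h2]; ring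

private lemma altC (q : ℕ) :
    ∑ k ∈ range (q+2), (-1:ℝ)^k * ((q+1).choose k : ℝ) = 0 := by
  have h := Int.alternating_sum_range_choose_of_ne (n := q+1) (by omega)
  have := congrArg (Int.cast : ℤ → ℝ) h
  push_cast at this
  simpa using this

private lemma altKC (p : ℕ) :
    ∑ k ∈ range (p+3), (-1:ℝ)^k * (k:ℝ) * ((p+2).choose k : ℝ) = 0 := by
  have h := key_shift (p+1) (fun k => (-1:ℝ)^k)
  have h2 : ∑ k ∈ range (p+2), (-1:ℝ)^(k+1) * ((p+1).choose k : ℝ)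
      = -∑ k ∈ range (p+2), (-1:ℝ)^k * ((p+1).choose k : ℝ) := by
    rw [← Finset.sum_neg_distrib]
    exact Finset.sum_congr rfl fun k _ => by ring
  rw [show (∑ k ∈ range (p+3), (-1:ℝ)^k * (k:ℝ) * ((p+2).choose k : ℝ))
      = ∑ k ∈ range (p+3), (k:ℝ) * (-1:ℝ)^k * ((p+2).choose k : ℝ) from
      Finset.sum_congr rfl fun k _ => by ring, h, h2, altC p]
  ring

private lemma altKKC (p : ℕ) :
    ∑ k ∈ range (p+4), (-1:ℝ)^k * (k:ℝ)^2 * ((p+3).choose k : ℝ) = 0 := by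
  have h := key_shift (p+2) (fun k => (-1:ℝ)^k * (k:ℝ))
  have h2 : ∑ k ∈ range (p+3), ((-1:ℝ)^(k+1) * ((k:ℕ)+1:ℝ)) * ((p+2).choose k : ℝ)
      = -(∑ k ∈ range (p+3), (-1:ℝ)^k * (k:ℝ) * ((p+2).choose k : ℝ))
        - ∑ k ∈ range (p+3), (-1:ℝ)^k * ((p+2).choose k : ℝ) := by
    rw [sub_eq_add_neg, ← Finset.sum_neg_distrib, ← Finset.sum_neg_distrib,
      ← Finset.sum_add_distrib]
    exact Finset.sum_congr rfl fun k _ => by ring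
  push_cast at h h2 ⊢
  calc ∑ k ∈ range (p+4), (-1:ℝ)^k * (k:ℝ)^2 * ((p+3).choose k : ℝ)
      = ∑ k ∈ range (p+4), (k:ℝ) * ((-1:ℝ)^k * (k:ℝ)) * ((p+3).choose k : ℝ) :=
        Finset.sum_congr rfl fun k _ => by ring
    _ = ((p:ℝ)+2+1) * ∑ k ∈ range (p+3), ((-1:ℝ)^(k+1) * ((k:ℝ)+1)) * ((p+2).choose k : ℝ) := h
    _ = 0 := by
        rw [show (∑ k ∈ range (p+3), ((-1:ℝ)^(k+1) * ((k:ℝ)+1)) * ((p+2).choose k : ℝ)) =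
          -(∑ k ∈ range (p+3), (-1:ℝ)^k * (k:ℝ) * ((p+2).choose k : ℝ))
            - ∑ k ∈ range (p+3), (-1:ℝ)^k * ((p+2).choose k : ℝ) from h2,
          altKC p, altC (p+1)]
        ring

private lemma parity_split (m j : ℕ) (hj : j ≤ 1) (f : ℕ → ℝ) :
    ∑ k ∈ (range m).filter (fun k => k % 2 = j), f k
      = (∑ k ∈ range m, f k + (-1:ℝ)^j * ∑ k ∈ range m, (-1:ℝ)^k * f k) / 2 := by
  rw [Finset.sum_filter, Finset.mul_sum, ← Finset.sum_add_distrib, Finset.sum_div]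
  refine Finset.sum_congr rfl fun k _ => ?_
  interval_cases j <;> rcases Nat.even_or_odd k with h | h
  · simp only [Nat.even_iff.mp h, h.neg_one_pow, if_pos]; ring
  · simp only [Nat.odd_iff.mp h, h.neg_one_pow, pow_zero]
    norm_num
  · simp only [Nat.even_iff.mp h, h.neg_one_pow, pow_one]
    norm_num
  · simp only [Nat.odd_iff.mp h, h.neg_one_pow, if_pos, pow_one]; ring

theorem stmt_12 (N g s : ℝ) (n : ℕ) :
    (2 ≤ n → ∀ j : ℕ, j ≤ 1 →
      (2:ℝ)^(-(n:ℤ)+1) * ∑ k ∈ (Finset.range (n+1)).filter (fun k => k % 2 = j),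
          (n.choose k : ℝ) * (N/2 - (g * k + s))
        = N/2 - s - g*n/2) ∧
    (3 ≤ n → ∀ j : ℕ, j ≤ 1 →
      (2:ℝ)^(-(n:ℤ)+1) * ∑ k ∈ (Finset.range (n+1)).filter (fun k => k % 2 = j),
          (n.choose k : ℝ) * (N/2 - (g * k + s))^2
        = (N/2 - s)^2 + (2*s - N) * g * n / 2 + g^2 * n * (n+1) / 4) := by
  constructor
  · intro hn j hj
    obtain ⟨m, rfl⟩ : ∃ m, n = m + 2 := ⟨n - 2, by omega⟩
    rw [parity_split _ j hj]
    have e1 : ∑ k ∈ range (m+3), ((m+2).choose k : ℝ) * (N/2 - (g*k+s))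
        = (N/2 - s) * 2^(m+2) - g * ((m+2) * 2^(m+1)) := by
      have : ∑ k ∈ range (m+3), ((m+2).choose k : ℝ) * (N/2 - (g*k+s))
          = (N/2 - s) * (∑ k ∈ range (m+3), ((m+2).choose k : ℝ))
            - g * ∑ k ∈ range (m+3), (k:ℝ) * ((m+2).choose k : ℝ) := by
        rw [Finset.mul_sum, Finset.mul_sum, ← Finset.sum_sub_distrib]
        exact Finset.sum_congr rfl fun k _ => by ring
      rw [this, sumC (m+2), sumKC (m+1)]
      push_cast; ring
    have e2 : ∑ k ∈ range (m+3), (-1:ℝ)^k * (((m+2).choose k : ℝ) * (N/2 - (g*k+s))) = 0 := by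
      have : ∑ k ∈ range (m+3), (-1:ℝ)^k * (((m+2).choose k : ℝ) * (N/2 - (g*k+s)))
          = (N/2 - s) * (∑ k ∈ range (m+3), (-1:ℝ)^k * ((m+2).choose k : ℝ))
            - g * ∑ k ∈ range (m+3), (-1:ℝ)^k * (k:ℝ) * ((m+2).choose k : ℝ) := by
        rw [Finset.mul_sum, Finset.mul_sum, ← Finset.sum_sub_distrib]
        exact Finset.sum_congr rfl fun k _ => by ring
      rw [this, altC (m+1), altKC m]; ring
    rw [e1, e2]
    have hp : (2:ℝ)^(-((m+2:ℕ):ℤ)+1) = ((2:ℝ)^(m+1))⁻¹ := by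
      rw [show (-((m+2:ℕ):ℤ)+1) = -((m+1:ℕ):ℤ) by push_cast; ring, zpow_neg, zpow_natCast]
    rw [hp, inv_mul_eq_div, div_eq_iff (by positivity : ((2:ℝ)^(m+1)) ≠ 0)]
    push_cast; ring
  · intro hn j hj
    obtain ⟨m, rfl⟩ : ∃ m, n = m + 3 := ⟨n - 3, by omega⟩
    rw [parity_split _ j hj]
    have e1 : ∑ k ∈ range (m+4), ((m+3).choose k : ℝ) * (N/2 - (g*k+s))^2
        = (N/2 - s)^2 * 2^(m+3) - 2*(N/2 - s)*g * ((m+3) * 2^(m+2))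
          + g^2 * ((m+3)*(m+4) * 2^(m+1)) := by
      have : ∑ k ∈ range (m+4), ((m+3).choose k : ℝ) * (N/2 - (g*k+s))^2
          = (N/2 - s)^2 * (∑ k ∈ range (m+4), ((m+3).choose k : ℝ))
            - 2*(N/2 - s)*g * (∑ k ∈ range (m+4), (k:ℝ) * ((m+3).choose k : ℝ))
            + g^2 * ∑ k ∈ range (m+4), (k:ℝ)^2 * ((m+3).choose k : ℝ) := by
        rw [Finset.mul_sum, Finset.mul_sum, Finset.mul_sum, ← Finset.sum_sub_distrib,
          ← Finset.sum_add_distrib]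
        exact Finset.sum_congr rfl fun k _ => by ring
      rw [this, sumC (m+3), sumKC (m+2), sumKKC (m+1)]
      push_cast; ring
    have e2 : ∑ k ∈ range (m+4), (-1:ℝ)^k * (((m+3).choose k : ℝ) * (N/2 - (g*k+s))^2) = 0 := by
      have : ∑ k ∈ range (m+4), (-1:ℝ)^k * (((m+3).choose k : ℝ) * (N/2 - (g*k+s))^2)
          = (N/2 - s)^2 * (∑ k ∈ range (m+4), (-1:ℝ)^k * ((m+3).choose k : ℝ))
            - 2*(N/2 - s)*g * (∑ k ∈ range (m+4), (-1:ℝ)^k * (k:ℝ) * ((m+3).choose k : ℝ))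
            + g^2 * ∑ k ∈ range (m+4), (-1:ℝ)^k * (k:ℝ)^2 * ((m+3).choose k : ℝ) := by
        rw [Finset.mul_sum, Finset.mul_sum, Finset.mul_sum, ← Finset.sum_sub_distrib,
          ← Finset.sum_add_distrib]
        exact Finset.sum_congr rfl fun k _ => by ring
      rw [this, altC (m+2), altKC (m+1), altKKC m]; ring
    rw [e1, e2]
    have hp : (2:ℝ)^(-((m+3:ℕ):ℤ)+1) = ((2:ℝ)^(m+2))⁻¹ := by
      rw [show (-((m+3:ℕ):ℤ)+1) = -((m+2:ℕ):ℤ) by push_cast; ring, zpow_neg, zpow_natCast]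
    rw [hp, inv_mul_eq_div, div_eq_iff (by positivity : ((2:ℝ)^(m+2)) ≠ 0)]
    push_cast; ring
end

section
/- Let S(s,j) denote the Stirling numbers of the second kind, defined by S(0,0) = 1, S(s,0) = 0 for s ≥ 1, S(0,j) = 0 for j ≥ 1, and S(s+1,j) = j·S(s,j) + S(s,j−1). Let n ≥ 1 and s be natural numbers with s ≥ n, with the convention 0^0 = 1. If n is even, then Σ_{0 ≤ k ≤ n, k even} C(n,k) k^s = Σ_{0 ≤ k ≤ n, k odd} C(n,k) k^s + S(s,n)·n!. If n is odd, then Σ_{0 ≤ k ≤ n, k odd} C(n,k) k^s = Σ_{0 ≤ k ≤ n, k even} C(n,k) k^s + S(s,n)·n!. -/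
open Finset

/-- The Stirling numbers of the second kind, via the recurrence
`S(s+1, j) = j * S(s, j) + S(s, j-1)`. -/
def stirling2 : ℕ → ℕ → ℕ
  | 0, 0 => 1
  | 0, _+1 => 0
  | _+1, 0 => 0
  | s+1, j+1 => (j+1) * stirling2 s (j+1) + stirling2 s j

lemma stirling2_eq_zero : ∀ s j : ℕ, s < j → stirling2 s j = 0
  | 0, 0, h => absurd h (by omega)
  | 0, j+1, _ => rfl
  | s+1, 0, h => absurd h (by omega)
  | s+1, j+1, h => by
      simp only [stirling2]
      rw [stirling2_eq_zero s (j+1) (by omega), stirling2_eq_zero s j (by omega)]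
      simp

lemma mul_descFactorial (k j : ℕ) :
    k * k.descFactorial j = k.descFactorial (j+1) + j * k.descFactorial j := by
  rcases le_or_gt j k with h | h
  · rw [Nat.descFactorial_succ]
    have : (k - j) * k.descFactorial j + j * k.descFactorial j
        = (k - j + j) * k.descFactorial j := by ring
    rw [this, Nat.sub_add_cancel h]
  · rw [Nat.descFactorial_eq_zero_iff_lt.2 h, Nat.descFactorial_eq_zero_iff_lt.2 (by omega)]
    simp

lemma pow_eq_sum_stirling (s k : ℕ) :
    k ^ s = ∑ j ∈ range (s+1), stirling2 s j * k.descFactorial j := by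
  induction s with
  | zero => simp [stirling2]
  | succ s ih =>
    calc k ^ (s+1) = ∑ j ∈ range (s+1), stirling2 s j * (k * k.descFactorial j) := by
          rw [pow_succ, mul_comm, ih, Finset.mul_sum]
          exact Finset.sum_congr rfl fun j _ => by ring
      _ = (∑ j ∈ range (s+1), stirling2 s j * k.descFactorial (j+1))
          + ∑ j ∈ range (s+1), stirling2 s j * (j * k.descFactorial j) := by
          rw [← Finset.sum_add_distrib]
          exact Finset.sum_congr rfl fun j _ => by rw [mul_descFactorial]; ring
      _ = (∑ j ∈ range (s+1), stirling2 s j * k.descFactorial (j+1))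
          + ∑ j ∈ range (s+1), (j+1) * stirling2 s (j+1) * k.descFactorial (j+1) := by
          congr 1
          rw [Finset.sum_range_succ' (fun j => stirling2 s j * (j * k.descFactorial j)),
            Finset.sum_range_succ]
          rw [stirling2_eq_zero s (s+1) (by omega)]
          simp only [Nat.mul_zero, Nat.zero_mul, zero_mul, mul_zero, add_zero]
          exact Finset.sum_congr rfl fun j _ => by ring
      _ = ∑ j ∈ range (s+1), stirling2 (s+1) (j+1) * k.descFactorial (j+1) := by
          rw [← Finset.sum_add_distrib]
          refine Finset.sum_congr rfl fun j _ => ?_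
          show _ = ((j+1) * stirling2 s (j+1) + stirling2 s j) * _
          ring
      _ = ∑ j ∈ range (s+2), stirling2 (s+1) j * k.descFactorial j := by
          rw [Finset.sum_range_succ' (fun j => stirling2 (s+1) j * k.descFactorial j)]
          simp [stirling2]

lemma alt_sum_descFactorial (n j : ℕ) :
    ∑ k ∈ range (n+1), (-1:ℤ)^k * n.choose k * k.descFactorial j
      = if j = n then (-1:ℤ)^n * n.factorial else 0 := by
  rcases lt_or_ge n j with h | h
  · rw [if_neg (by omega)]
    apply Finset.sum_eq_zero
    intro k hk
    rw [Finset.mem_range] at hk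
    rw [Nat.descFactorial_eq_zero_iff_lt.2 (by omega)]
    simp
  · -- j ≤ n
    have split : range (n+1) = Finset.Ico 0 j ∪ Finset.Ico j (n+1) := by
      rw [Finset.range_eq_Ico, Finset.Ico_union_Ico_eq_Ico (by omega) (by omega)]
    rw [split, Finset.sum_union (by
      simp [Finset.disjoint_left, Finset.mem_Ico]; omega)]
    have h1 : ∑ k ∈ Finset.Ico 0 j, (-1:ℤ)^k * n.choose k * k.descFactorial j = 0 := by
      apply Finset.sum_eq_zero
      intro k hk
      rw [Finset.mem_Ico] at hk
      rw [Nat.descFactorial_eq_zero_iff_lt.2 hk.2]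
      simp
    rw [h1, zero_add, Finset.sum_Ico_eq_sum_range]
    have hrange : n + 1 - j = (n - j) + 1 := by omega
    rw [hrange]
    have hterm : ∀ m ∈ range ((n-j)+1),
        (-1:ℤ)^(j+m) * n.choose (j+m) * (j+m).descFactorial j
        = ((-1:ℤ)^j * j.factorial * n.choose j) * ((-1:ℤ)^m * (n-j).choose m) := by
      intro m hm
      rw [Finset.mem_range] at hm
      have hjm : j + m ≤ n := by omega
      have key : (n.choose (j+m) : ℤ) * (j+m).descFactorial j
          = (j.factorial : ℤ) * n.choose j * (n-j).choose m := by
        have hcm := Nat.choose_mul (n := n) (Nat.le_add_right j m)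
        rw [Nat.add_sub_cancel_left] at hcm
        rw [Nat.descFactorial_eq_factorial_mul_choose]
        push_cast
        rw [show (n.choose (j+m) : ℤ) * (j.factorial * (j+m).choose j)
          = (j.factorial : ℤ) * (n.choose (j+m) * (j+m).choose j) by ring]
        rw_mod_cast [hcm]
        push_cast; ring
      rw [pow_add, mul_assoc, mul_assoc, key]
      ring
    rw [Finset.sum_congr rfl hterm, ← Finset.mul_sum, Int.alternating_sum_range_choose]
    rcases eq_or_lt_of_le h with rfl | hlt
    · simp
    · rw [if_neg (by omega), if_neg (by omega)]
      simp

lemma alt_sum_pow (n s : ℕ) (hs : n ≤ s) :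
    ∑ k ∈ range (n+1), (-1:ℤ)^k * n.choose k * k ^ s
      = (-1:ℤ)^n * stirling2 s n * n.factorial := by
  have hc : ∀ k : ℕ, ((k:ℤ))^s = ∑ j ∈ range (s+1), (stirling2 s j : ℤ) * (k.descFactorial j : ℤ) := by
    intro k
    exact_mod_cast congrArg (Nat.cast : ℕ → ℤ) (pow_eq_sum_stirling s k)
  have step : ∑ k ∈ range (n+1), (-1:ℤ)^k * n.choose k * (k:ℤ) ^ s
      = ∑ j ∈ range (s+1), (stirling2 s j : ℤ) *
          ∑ k ∈ range (n+1), (-1:ℤ)^k * n.choose k * k.descFactorial j := by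
    simp_rw [Finset.mul_sum]
    rw [Finset.sum_comm]
    apply Finset.sum_congr rfl
    intro k _
    rw [hc k, Finset.mul_sum]
    exact Finset.sum_congr rfl fun j _ => by ring
  push_cast
  rw [step]
  simp_rw [alt_sum_descFactorial]
  rw [Finset.sum_eq_single_of_mem n (Finset.mem_range.2 (by omega))]
  · rw [if_pos rfl]; ring
  · intro j _ hj; rw [if_neg hj, mul_zero]

theorem stmt_14 (n s : ℕ) (hn : 1 ≤ n) (hs : n ≤ s) :
    (Even n →
      ∑ k ∈ (Finset.range (n+1)).filter (fun k => k % 2 = 0), n.choose k * k ^ s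
      = (∑ k ∈ (Finset.range (n+1)).filter (fun k => k % 2 = 1), n.choose k * k ^ s)
        + stirling2 s n * n.factorial) ∧
    (Odd n →
      ∑ k ∈ (Finset.range (n+1)).filter (fun k => k % 2 = 1), n.choose k * k ^ s
      = (∑ k ∈ (Finset.range (n+1)).filter (fun k => k % 2 = 0), n.choose k * k ^ s)
        + stirling2 s n * n.factorial) := by
  have halt := alt_sum_pow n s hs
  have hfilter : (range (n+1)).filter (fun k => ¬ k % 2 = 0)
      = (range (n+1)).filter (fun k => k % 2 = 1) := by
    apply Finset.filter_congr; intro k _; simp [Nat.mod_two_ne_zero]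
  have hEO : ((∑ k ∈ (range (n+1)).filter (fun k => k % 2 = 0), n.choose k * k ^ s : ℕ) : ℤ)
      - ((∑ k ∈ (range (n+1)).filter (fun k => k % 2 = 1), n.choose k * k ^ s : ℕ) : ℤ)
      = ∑ k ∈ range (n+1), (-1:ℤ)^k * n.choose k * k ^ s := by
    rw [← Finset.sum_filter_add_sum_filter_not (range (n+1)) (fun k => k % 2 = 0)
      (fun k => (-1:ℤ)^k * n.choose k * k ^ s)]
    have he : ∑ k ∈ (range (n+1)).filter (fun k => k % 2 = 0), (-1:ℤ)^k * n.choose k * k ^ s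
        = ((∑ k ∈ (range (n+1)).filter (fun k => k % 2 = 0), n.choose k * k ^ s : ℕ) : ℤ) := by
      push_cast
      refine Finset.sum_congr rfl fun k hk => ?_
      rw [Finset.mem_filter] at hk
      rw [(Nat.even_iff.2 hk.2).neg_one_pow, one_mul]
    have ho : ∑ k ∈ (range (n+1)).filter (fun k => ¬ k % 2 = 0), (-1:ℤ)^k * n.choose k * k ^ s
        = -((∑ k ∈ (range (n+1)).filter (fun k => k % 2 = 1), n.choose k * k ^ s : ℕ) : ℤ) := by
      rw [hfilter]
      push_cast
      rw [← Finset.sum_neg_distrib]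
      refine Finset.sum_congr rfl fun k hk => ?_
      rw [Finset.mem_filter] at hk
      rw [(Nat.odd_iff.2 hk.2).neg_one_pow]
      ring
    rw [he, ho]
    ring
  rw [halt] at hEO
  constructor
  · intro hne
    rw [hne.neg_one_pow, one_mul] at hEO
    have h2 : ((∑ k ∈ (range (n+1)).filter (fun k => k % 2 = 0), n.choose k * k ^ s : ℕ) : ℤ)
        = ((∑ k ∈ (range (n+1)).filter (fun k => k % 2 = 1), n.choose k * k ^ s : ℕ) : ℤ)
          + ((stirling2 s n * n.factorial : ℕ) : ℤ) := by push_cast at hEO ⊢ <;> linarith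
    exact_mod_cast h2
  · intro hno
    rw [hno.neg_one_pow] at hEO
    have h2 : ((∑ k ∈ (range (n+1)).filter (fun k => k % 2 = 1), n.choose k * k ^ s : ℕ) : ℤ)
        = ((∑ k ∈ (range (n+1)).filter (fun k => k % 2 = 0), n.choose k * k ^ s : ℕ) : ℤ)
          + ((stirling2 s n * n.factorial : ℕ) : ℤ) := by push_cast at hEO ⊢ <;> linarith
    exact_mod_cast h2
end

section
/- Let n and s be natural numbers with s < n, let y ∈ ℝ, and set y′ = y/2. Writing k_(s) = k(k−1)⋯(k−s+1) for the falling factorial (with k_(0) = 1) and n_(s) for the corresponding falling factorial of n, the following hold: Σ_{0 ≤ k ≤ n, k even} C(n,k) · k_(s) · exp(i k y) = n_(s) · exp(i y′ (n+s)) · 2^{n−s−1} · ( cos^{n−s}(y′) + (−1)^s (−i)^{n−s} sin^{n−s}(y′) ), and Σ_{0 ≤ k ≤ n, k odd} C(n,k) · k_(s) · exp(i k y) = n_(s) · exp(i y′ (n+s)) · 2^{n−s−1} · ( cos^{n−s}(y′) − (−1)^s (−i)^{n−s} sin^{n−s}(y′) ). -/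
open Finset

lemma key_sum (n s : ℕ) (hs : s ≤ n) (x : ℂ) :
    ∑ k ∈ Finset.range (n+1), (n.choose k : ℂ) * (k.descFactorial s : ℂ) * x^k
      = (n.descFactorial s : ℂ) * x^s * (1+x)^(n-s) := by
  have hsplit : Finset.range (n+1) = Finset.range s ∪ Finset.Ico s (n+1) := by
    rw [Finset.range_eq_Ico, Finset.range_eq_Ico, Finset.Ico_union_Ico_eq_Ico (Nat.zero_le _) (by omega)]
  rw [hsplit, Finset.sum_union (by
    rw [Finset.range_eq_Ico]
    exact Finset.Ico_disjoint_Ico_consecutive 0 s (n+1))]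
  have h1 : ∑ k ∈ Finset.range s, (n.choose k : ℂ) * (k.descFactorial s : ℂ) * x^k = 0 := by
    apply Finset.sum_eq_zero
    intro k hk
    simp only [Finset.mem_range] at hk
    rw [Nat.descFactorial_eq_zero_iff_lt.2 hk]
    simp
  rw [h1, zero_add, Finset.sum_Ico_eq_sum_range]
  have hidx : n + 1 - s = (n - s) + 1 := by omega
  rw [hidx]
  have hbin : (1+x)^(n-s) = ∑ j ∈ Finset.range (n-s+1), ((n-s).choose j : ℂ) * x^j := by
    rw [add_comm (1:ℂ) x, add_pow]
    apply Finset.sum_congr rfl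
    intro j _
    ring
  rw [hbin, Finset.mul_sum]
  apply Finset.sum_congr rfl
  intro j hj
  simp only [Finset.mem_range] at hj
  have hkn : s + j ≤ n := by omega
  have hnat : n.choose (s+j) * (s+j).descFactorial s = n.descFactorial s * (n-s).choose j := by
    rw [Nat.descFactorial_eq_factorial_mul_choose, Nat.descFactorial_eq_factorial_mul_choose]
    have := Nat.choose_mul (n := n) (Nat.le_add_right s j)
    rw [Nat.add_sub_cancel_left] at this
    rw [← Nat.mul_assoc, Nat.mul_comm (n.choose (s+j)) s.factorial, Nat.mul_assoc, this]
    ring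
  have hcast : (n.choose (s+j) : ℂ) * ((s+j).descFactorial s : ℂ)
      = (n.descFactorial s : ℂ) * ((n-s).choose j : ℂ) := by
    exact_mod_cast congrArg (Nat.cast : ℕ → ℂ) hnat
  calc (n.choose (s+j) : ℂ) * ((s+j).descFactorial s : ℂ) * x^(s+j)
      = ((n.choose (s+j) : ℂ) * ((s+j).descFactorial s : ℂ)) * (x^s * x^j) := by ring
    _ = (n.descFactorial s : ℂ) * x^s * (((n-s).choose j : ℂ) * x^j) := by rw [hcast]; ring

theorem stmt_15 (n s : ℕ) (h : s < n) (y y' : ℝ) (hy' : y' = y/2) :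
    (∑ k ∈ (Finset.range (n+1)).filter (fun k => k % 2 = 0),
        (n.choose k : ℂ) * (k.descFactorial s : ℂ)
          * Complex.exp (Complex.I * (k : ℂ) * (y : ℂ))
      = (n.descFactorial s : ℂ) * Complex.exp (Complex.I * (y' : ℂ) * ((n : ℂ) + (s : ℂ)))
          * 2^(n - s - 1)
          * ((Real.cos y' : ℂ)^(n-s) + (-1)^s * (-Complex.I)^(n-s) * (Real.sin y' : ℂ)^(n-s))) ∧
    (∑ k ∈ (Finset.range (n+1)).filter (fun k => k % 2 = 1),
        (n.choose k : ℂ) * (k.descFactorial s : ℂ)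
          * Complex.exp (Complex.I * (k : ℂ) * (y : ℂ))
      = (n.descFactorial s : ℂ) * Complex.exp (Complex.I * (y' : ℂ) * ((n : ℂ) + (s : ℂ)))
          * 2^(n - s - 1)
          * ((Real.cos y' : ℂ)^(n-s) - (-1)^s * (-Complex.I)^(n-s) * (Real.sin y' : ℂ)^(n-s))) := by
  set z : ℂ := Complex.exp (Complex.I * (y' : ℂ)) with hzdef
  set c : ℂ := (Real.cos y' : ℂ) with hcdef
  set si : ℂ := (Real.sin y' : ℂ) with hsdef
  set D : ℂ := (n.descFactorial s : ℂ) with hDdef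
  have hy2 : (y : ℂ) = 2 * (y' : ℂ) := by rw [hy']; push_cast; ring
  have hzI : z = Complex.cos y' + Complex.sin y' * Complex.I := by
    rw [hzdef, show Complex.I * (y' : ℂ) = (y' : ℂ) * Complex.I by ring, Complex.exp_mul_I]
  have hc1 : 1 + z^2 = 2 * c * z := by
    rw [hzI, hcdef, Complex.ofReal_cos]
    linear_combination (Complex.sin (y':ℂ))^2 * Complex.I_sq - Complex.sin_sq_add_cos_sq (y':ℂ)
  have hd1 : 1 + -(z^2) = -2 * Complex.I * si * z := by
    rw [hzI, hsdef, Complex.ofReal_sin]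
    linear_combination (Complex.sin (y':ℂ))^2 * Complex.I_sq - Complex.sin_sq_add_cos_sq (y':ℂ)
  have hterm : ∀ k : ℕ, Complex.exp (Complex.I * (k : ℂ) * (y : ℂ)) = (z^2)^k := by
    intro k
    rw [hzdef, ← Complex.exp_nat_mul, ← Complex.exp_nat_mul]
    congr 1
    push_cast [hy2]
    ring
  have hE : Complex.exp (Complex.I * (y' : ℂ) * ((n : ℂ) + (s : ℂ))) = z^(n+s) := by
    rw [hzdef, ← Complex.exp_nat_mul]
    congr 1
    push_cast
    ring
  have hzns : z^(n+s) = z^(2*s) * z^(n-s) := by rw [← pow_add]; congr 1; omega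
  have hpow2 : (2:ℂ)^(n-s) = 2 * 2^(n-s-1) := by
    rw [← pow_succ']
    congr 1
    omega
  set f : ℕ → ℂ := fun k =>
    (n.choose k : ℂ) * (k.descFactorial s : ℂ) * Complex.exp (Complex.I * (k : ℂ) * (y : ℂ))
    with hfdef
  have hS0 : ∑ k ∈ Finset.range (n+1), f k
      = D * 2^(n-s-1) * 2 * c^(n-s) * z^(n+s) := by
    have := key_sum n s h.le (z^2)
    rw [show ∑ k ∈ Finset.range (n+1), f k
        = ∑ k ∈ Finset.range (n+1), (n.choose k : ℂ) * (k.descFactorial s : ℂ) * (z^2)^k from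
      Finset.sum_congr rfl fun k _ => by simp only [hfdef]; rw [hterm k]]
    rw [this, hc1, hzns, mul_pow, mul_pow, hpow2]
    ring
  have hS1 : ∑ k ∈ Finset.range (n+1), (-1:ℂ)^k * f k
      = D * 2^(n-s-1) * 2 * (-1)^s * (-Complex.I)^(n-s) * si^(n-s) * z^(n+s) := by
    have := key_sum n s h.le (-(z^2))
    rw [show ∑ k ∈ Finset.range (n+1), (-1:ℂ)^k * f k
        = ∑ k ∈ Finset.range (n+1), (n.choose k : ℂ) * (k.descFactorial s : ℂ) * (-(z^2))^k from
      Finset.sum_congr rfl fun k _ => by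
        simp only [hfdef]; rw [hterm k, neg_pow]; ring]
    rw [this, hd1, hzns, show (-2 * Complex.I * si * z) = 2 * (-Complex.I) * si * z by ring,
      mul_pow, mul_pow, mul_pow, hpow2, neg_pow (z^2)]
    ring
  have hfilter : (Finset.range (n+1)).filter (fun k => ¬ k % 2 = 0)
      = (Finset.range (n+1)).filter (fun k => k % 2 = 1) := by
    apply Finset.filter_congr
    intro k _
    simp only [Nat.mod_two_ne_zero]
  have hsum : (∑ k ∈ (Finset.range (n+1)).filter (fun k => k % 2 = 0), f k)
      + (∑ k ∈ (Finset.range (n+1)).filter (fun k => k % 2 = 1), f k)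
      = D * 2^(n-s-1) * 2 * c^(n-s) * z^(n+s) := by
    rw [← hfilter, Finset.sum_filter_add_sum_filter_not, hS0]
  have hdiff : (∑ k ∈ (Finset.range (n+1)).filter (fun k => k % 2 = 0), f k)
      - (∑ k ∈ (Finset.range (n+1)).filter (fun k => k % 2 = 1), f k)
      = D * 2^(n-s-1) * 2 * (-1)^s * (-Complex.I)^(n-s) * si^(n-s) * z^(n+s) := by
    rw [← hS1, ← hfilter, ← Finset.sum_filter_add_sum_filter_not (Finset.range (n+1))
      (fun k => k % 2 = 0) (fun k => (-1:ℂ)^k * f k)]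
    have he : ∑ k ∈ (Finset.range (n+1)).filter (fun k => k % 2 = 0), (-1:ℂ)^k * f k
        = ∑ k ∈ (Finset.range (n+1)).filter (fun k => k % 2 = 0), f k := by
      apply Finset.sum_congr rfl
      intro k hk
      simp only [Finset.mem_filter] at hk
      rw [(Nat.even_iff.2 hk.2).neg_one_pow, one_mul]
    have ho : ∑ k ∈ (Finset.range (n+1)).filter (fun k => ¬ k % 2 = 0), (-1:ℂ)^k * f k
        = -∑ k ∈ (Finset.range (n+1)).filter (fun k => ¬ k % 2 = 0), f k := by
      rw [← Finset.sum_neg_distrib]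
      apply Finset.sum_congr rfl
      intro k hk
      simp only [Finset.mem_filter] at hk
      rw [(Nat.odd_iff.2 (by omega)).neg_one_pow]
      ring
    rw [he, ho]
    ring
  rw [hE]
  constructor
  · linear_combination (hsum + hdiff) / 2
  · linear_combination (hsum - hdiff) / 2
end
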